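/- arXiv:1607.00816 — 7 statements merged into one kernel-verified Lean document; each statement's English description precedes it below -/
import Mathlib

section
/- Let δ > 0 and let Q : ℝ → ℝ be the mid-rise uniform quantizer Q(λ) = δ(⌊λ/δ⌋ + 1/2). If ξ is uniformly distributed on [0, δ], then for all a, a' ∈ ℝ, the expectation E_ξ |Q(a + ξ) - Q(a' + ξ)| = |a - a'|. (Dithering cancels quantization in expectation.) -/
open MeasureTheory

/-- Mid-rise uniform quantizer of resolution `δ`. -/
noncomputable def quant (δ lam : ℝ) : ℝ := δ * (⌊lam / δ⌋ + 1/2)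

/-- Uniform probability measure on `[0, δ]`. -/
noncomputable def unif (δ : ℝ) : Measure ℝ :=
  (ENNReal.ofReal δ)⁻¹ • volume.restrict (Set.Icc 0 δ)

lemma key (δ : ℝ) (hδ : 0 < δ) (a : ℝ) :
    IntegrableOn (fun ξ => ((⌊(a+ξ)/δ⌋ : ℤ) : ℝ)) (Set.Icc 0 δ) ∧
    ∫ ξ in Set.Icc 0 δ, ((⌊(a+ξ)/δ⌋ : ℤ) : ℝ) = a := by
  set n : ℤ := ⌊a/δ⌋ with hn
  set r : ℝ := a - n*δ with hrdef
  have hr0 : 0 ≤ r := by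
    have h := Int.floor_le (a/δ)
    have : (n:ℝ) * δ ≤ a := by
      calc (n:ℝ)*δ ≤ (a/δ)*δ := by nlinarith
      _ = a := by field_simp
    linarith
  have hr1 : r < δ := by
    have h := Int.lt_floor_add_one (a/δ)
    have : a < ((n:ℝ)+1)*δ := by
      calc a = (a/δ)*δ := by field_simp
      _ < ((n:ℝ)+1)*δ := by nlinarith
    simp only [hrdef]; nlinarith
  have hfloor : ∀ ξ : ℝ, ⌊(a+ξ)/δ⌋ = n + ⌊(r+ξ)/δ⌋ := by
    intro ξ
    have h : (a+ξ)/δ = (n:ℝ) + (r+ξ)/δ := by field_simp [hrdef]; ring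
    rw [h, Int.floor_intCast_add]
  have h1 : ∀ ξ ∈ Set.Ico (0:ℝ) (δ - r), ((⌊(a+ξ)/δ⌋:ℤ):ℝ) = (n:ℝ) := by
    intro ξ hξ
    obtain ⟨h1', h2'⟩ := hξ
    have : ⌊(r+ξ)/δ⌋ = 0 := by
      rw [Int.floor_eq_zero_iff]
      constructor
      · positivity
      · rw [div_lt_one hδ]; linarith
    simp [hfloor ξ, this]
  have h2 : ∀ ξ ∈ Set.Icc (δ - r) δ, ((⌊(a+ξ)/δ⌋:ℤ):ℝ) = (n:ℝ) + 1 := by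
    intro ξ hξ
    obtain ⟨h1', h2'⟩ := hξ
    have : ⌊(r+ξ)/δ⌋ = 1 := by
      rw [Int.floor_eq_iff]
      constructor
      · push_cast; rw [le_div_iff₀ hδ]; linarith
      · push_cast; rw [div_lt_iff₀ hδ]; linarith
    rw [hfloor ξ, this]; push_cast; ring
  have hdisj : Disjoint (Set.Ico (0:ℝ) (δ - r)) (Set.Icc (δ - r) δ) :=
    by rw [Set.disjoint_left]; rintro x ⟨_, h⟩ ⟨h', _⟩; linarith
  have hunion : Set.Ico (0:ℝ) (δ - r) ∪ Set.Icc (δ - r) δ = Set.Icc 0 δ :=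
    Set.Ico_union_Icc_eq_Icc (by linarith) (by linarith)
  have hm1 : MeasurableSet (Set.Ico (0:ℝ) (δ - r)) := measurableSet_Ico
  have hm2 : MeasurableSet (Set.Icc (δ - r) δ) := measurableSet_Icc
  have hi1 : IntegrableOn (fun ξ => ((⌊(a+ξ)/δ⌋:ℤ):ℝ)) (Set.Ico (0:ℝ) (δ - r)) :=
    (integrableOn_const measure_Ico_lt_top.ne enorm_ne_top).congr_fun
      (fun ξ hξ => (h1 ξ hξ).symm) hm1
  have hi2 : IntegrableOn (fun ξ => ((⌊(a+ξ)/δ⌋:ℤ):ℝ)) (Set.Icc (δ - r) δ) :=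
    (integrableOn_const measure_Icc_lt_top.ne enorm_ne_top).congr_fun
      (fun ξ hξ => (h2 ξ hξ).symm) hm2
  have hint : IntegrableOn (fun ξ => ((⌊(a+ξ)/δ⌋:ℤ):ℝ)) (Set.Icc 0 δ) := by
    rw [← hunion]; exact hi1.union hi2
  refine ⟨hint, ?_⟩
  rw [← hunion, setIntegral_union hdisj hm2 hi1 hi2,
    setIntegral_congr_fun hm1 h1, setIntegral_congr_fun hm2 h2,
    setIntegral_const, setIntegral_const,
    Real.volume_real_Ico_of_le (by linarith), Real.volume_real_Icc_of_le (by linarith)]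
  simp only [smul_eq_mul, hrdef]
  ring

lemma half (δ : ℝ) (hδ : 0 < δ) (a a' : ℝ) (h : a' ≤ a) :
    ∫ ξ, |quant δ (a + ξ) - quant δ (a' + ξ)| ∂(unif δ) = |a - a'| := by
  obtain ⟨hint, hval⟩ := key δ hδ a
  obtain ⟨hint', hval'⟩ := key δ hδ a'
  have heq : ∀ ξ : ℝ, |quant δ (a + ξ) - quant δ (a' + ξ)|
      = δ * ((⌊(a+ξ)/δ⌋:ℝ) - (⌊(a'+ξ)/δ⌋:ℝ)) := by
    intro ξ
    have hmono : ((⌊(a'+ξ)/δ⌋:ℤ):ℝ) ≤ ((⌊(a+ξ)/δ⌋:ℤ):ℝ) := by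
      have hd : (a'+ξ)/δ ≤ (a+ξ)/δ := by gcongr <;> linarith
      exact_mod_cast Int.floor_le_floor hd
    have : quant δ (a + ξ) - quant δ (a' + ξ)
        = δ * ((⌊(a+ξ)/δ⌋:ℝ) - (⌊(a'+ξ)/δ⌋:ℝ)) := by
      simp only [quant]; ring
    rw [this, abs_of_nonneg (by nlinarith)]
  simp only [unif, integral_smul_measure, heq]
  rw [integral_const_mul, integral_sub hint hint', hval, hval',
    ENNReal.toReal_inv, ENNReal.toReal_ofReal hδ.le, smul_eq_mul,
    abs_of_nonneg (by linarith : (0:ℝ) ≤ a - a')]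
  field_simp

/-- Dithering cancels quantization in expectation. -/
theorem stmt0 (δ : ℝ) (hδ : 0 < δ) (a a' : ℝ) :
    ∫ ξ, |quant δ (a + ξ) - quant δ (a' + ξ)| ∂(unif δ) = |a - a'| := by
  rcases le_total a' a with h | h
  · exact half δ hδ a a' h
  · rw [abs_sub_comm a a']
    simp_rw [abs_sub_comm (quant δ (a + _))]
    exact half δ hδ a' a h
end

section
/- For u uniformly distributed on [0,1] and any a, a' ∈ ℝ, E_u |⌊a + u⌋ - ⌊a' + u⌋| = |a - a'|. -/
open MeasureTheory

lemma floor_mono_real (a : ℝ) : Monotone (fun u : ℝ => ((⌊a + u⌋ : ℤ) : ℝ)) := by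
  intro u v h
  simp only
  exact_mod_cast Int.floor_le_floor (by linarith : a + u ≤ a + v)

lemma floor_ii (a : ℝ) (x y : ℝ) :
    IntervalIntegrable (fun u : ℝ => ((⌊a + u⌋ : ℤ) : ℝ)) volume x y :=
  (floor_mono_real a).monotoneOn _ |>.intervalIntegrable

lemma floor_integral (a : ℝ) : ∫ u in (0:ℝ)..1, ((⌊a + u⌋ : ℤ) : ℝ) = a := by
  set c : ℝ := 1 - Int.fract a with hc
  have hf0 := Int.fract_nonneg a
  have hf1 := Int.fract_lt_one a
  have hfl : (⌊a⌋ : ℝ) = a - Int.fract a := by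
    have := Int.floor_add_fract a; linarith
  have hc0 : 0 < c := by simp only [hc]; linarith
  have hc1 : c ≤ 1 := by simp only [hc]; linarith
  have h1 : ∫ u in (0:ℝ)..c, ((⌊a + u⌋ : ℤ) : ℝ) = c * ⌊a⌋ := by
    have hne : ∀ᵐ u : ℝ, u ≠ c := by
      rw [MeasureTheory.ae_iff]
      have : {u : ℝ | ¬ u ≠ c} = {c} := by ext u; simp
      rw [this]; exact Real.volume_singleton
    have hcongr : ∫ u in (0:ℝ)..c, ((⌊a + u⌋ : ℤ) : ℝ)
        = ∫ u in (0:ℝ)..c, ((⌊a⌋ : ℤ) : ℝ) := by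
      apply intervalIntegral.integral_congr_ae
      filter_upwards [hne] with u hu hmem
      rw [Set.uIoc_of_le hc0.le] at hmem
      have hu1 : 0 < u := hmem.1
      have hu2 : u < c := lt_of_le_of_ne hmem.2 hu
      have : ⌊a + u⌋ = ⌊a⌋ := by
        rw [Int.floor_eq_iff]
        constructor
        · linarith [Int.floor_le a]
        · linarith [hfl]
      rw [this]
    rw [hcongr, intervalIntegral.integral_const]
    simp [mul_comm]
  have h2 : ∫ u in c..(1:ℝ), ((⌊a + u⌋ : ℤ) : ℝ) = (1 - c) * (⌊a⌋ + 1) := by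
    have hcongr : ∫ u in c..(1:ℝ), ((⌊a + u⌋ : ℤ) : ℝ)
        = ∫ u in c..(1:ℝ), ((⌊a⌋ + 1 : ℤ) : ℝ) := by
      apply intervalIntegral.integral_congr
      intro u hmem
      rw [Set.uIcc_of_le hc1] at hmem
      have hu1 : c ≤ u := hmem.1
      have hu2 : u ≤ 1 := hmem.2
      have : ⌊a + u⌋ = ⌊a⌋ + 1 := by
        rw [Int.floor_eq_iff]
        constructor
        · push_cast; linarith [hfl]
        · push_cast [Int.cast_add]; linarith [Int.lt_floor_add_one a]
      simp [this]
    rw [hcongr, intervalIntegral.integral_const, smul_eq_mul]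
    push_cast
    ring
  rw [← intervalIntegral.integral_add_adjacent_intervals (floor_ii a 0 c) (floor_ii a c 1),
    h1, h2]
  have : Int.fract a = 1 - c := by simp [hc]
  nlinarith [hfl]

lemma aux1 (a a' : ℝ) (h : a' ≤ a) :
    ∫ u in (0:ℝ)..1, |((⌊a + u⌋ : ℤ) : ℝ) - ((⌊a' + u⌋ : ℤ) : ℝ)| = a - a' := by
  have habs : ∀ u : ℝ, |((⌊a + u⌋ : ℤ) : ℝ) - ((⌊a' + u⌋ : ℤ) : ℝ)|
      = ((⌊a + u⌋ : ℤ) : ℝ) - ((⌊a' + u⌋ : ℤ) : ℝ) := by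
    intro u
    apply abs_of_nonneg
    have : ⌊a' + u⌋ ≤ ⌊a + u⌋ := Int.floor_le_floor (by linarith)
    have : ((⌊a' + u⌋ : ℤ) : ℝ) ≤ ((⌊a + u⌋ : ℤ) : ℝ) := by exact_mod_cast this
    linarith
  simp_rw [habs]
  rw [intervalIntegral.integral_sub (floor_ii a 0 1) (floor_ii a' 0 1),
    floor_integral, floor_integral]

/-- For `u ~ U([0,1])`, `E_u |⌊a + u⌋ - ⌊a' + u⌋| = |a - a'|`. -/
theorem stmt1 (a a' : ℝ) :
    ∫ u, |(⌊a + u⌋ : ℝ) - (⌊a' + u⌋ : ℝ)| ∂(unif 1) = |a - a'| := by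
  have hμ : unif 1 = volume.restrict (Set.Icc (0:ℝ) 1) := by
    simp [unif]
  rw [hμ, MeasureTheory.integral_Icc_eq_integral_Ioc,
    ← intervalIntegral.integral_of_le zero_le_one]
  rcases le_total a' a with h | h
  · rw [aux1 a a' h, abs_of_nonneg (by linarith)]
  · have hcomm : ∀ u : ℝ, |((⌊a + u⌋ : ℤ) : ℝ) - ((⌊a' + u⌋ : ℤ) : ℝ)|
        = |((⌊a' + u⌋ : ℤ) : ℝ) - ((⌊a + u⌋ : ℤ) : ℝ)| := fun u => abs_sub_comm _ _
    simp_rw [hcomm]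
    rw [aux1 a' a h, abs_of_nonpos (by linarith)]
    ring
end

section
/- Let δ > 0, t ∈ ℝ, and define S^t = {(a,a') ∈ ℝ² : a < -t, a' > t} ∪ {(a,a') : a > t, a' < -t} and d^t(a,a') = δ · Σ_{k ∈ ℤ} 1_{S^t}(a - kδ, a' - kδ). Then for all a, a' ∈ ℝ, all t ∈ ℝ, all ε ≥ 0, and all r, r' with |r|, |r'| ≤ ε: d^{t+ε}(a, a') ≤ d^t(a + r, a' + r') ≤ d^{t-ε}(a, a'). -/
/-- The set `S^t` of pairs separated by the softened threshold at 0. -/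
def Ssoft (t : ℝ) : Set (ℝ × ℝ) :=
  {p | p.1 < -t ∧ t < p.2} ∪ {p | t < p.1 ∧ p.2 < -t}

/-- Softened quantized distance `d^t` of resolution `δ`. -/
noncomputable def dsoft (δ t a a' : ℝ) : ℝ :=
  δ * ∑' k : ℤ, Set.indicator (Ssoft t) (fun _ => (1 : ℝ)) (a - k * δ, a' - k * δ)

lemma summable_dsoft (δ : ℝ) (hδ : 0 < δ) (t a a' : ℝ) :
    Summable (fun k : ℤ =>
      Set.indicator (Ssoft t) (fun _ => (1 : ℝ)) (a - k * δ, a' - k * δ)) := by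
  set B : ℝ := |a| + |a'| + |t| with hB
  set N : ℤ := ⌈B / δ⌉ with hN
  apply summable_of_ne_finset_zero (s := Finset.Icc (-N) N)
  intro k hk
  by_contra h
  have hmem : (a - k * δ, a' - k * δ) ∈ Ssoft t := by
    by_contra hm
    exact h (Set.indicator_of_notMem hm _)
  have hbound : |(k : ℝ) * δ| ≤ B := by
    rcases hmem with ⟨h1, h2⟩ | ⟨h1, h2⟩
    · simp only at h1 h2
      have hlo : a + t < (k : ℝ) * δ := by linarith
      have hhi : (k : ℝ) * δ < a' - t := by linarith
      rw [abs_le]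
      constructor
      · nlinarith [abs_nonneg a, abs_nonneg a', abs_nonneg t, neg_abs_le a, neg_abs_le t]
      · nlinarith [abs_nonneg a, abs_nonneg a', abs_nonneg t, le_abs_self a', neg_abs_le t]
    · simp only at h1 h2
      have hlo : a' + t < (k : ℝ) * δ := by linarith
      have hhi : (k : ℝ) * δ < a - t := by linarith
      rw [abs_le]
      constructor
      · nlinarith [abs_nonneg a, abs_nonneg a', abs_nonneg t, neg_abs_le a', neg_abs_le t]
      · nlinarith [abs_nonneg a, abs_nonneg a', abs_nonneg t, le_abs_self a, neg_abs_le t]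
  have hk' : |(k : ℝ)| ≤ B / δ := by
    rw [le_div_iff₀ hδ]
    calc |(k : ℝ)| * δ = |(k : ℝ) * δ| := by rw [abs_mul, abs_of_pos hδ]
    _ ≤ B := hbound
  have : ((|k| : ℤ) : ℝ) ≤ (N : ℝ) := by
    push_cast
    exact hk'.trans (Int.le_ceil _)
  have hkN : |k| ≤ N := by exact_mod_cast this
  exact hk (Finset.mem_Icc.mpr (abs_le.mp hkN))

lemma indicator_le_of_imp {p q : ℝ × ℝ} {s u : ℝ} (h : p ∈ Ssoft s → q ∈ Ssoft u) :
    Set.indicator (Ssoft s) (fun _ => (1 : ℝ)) p ≤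
      Set.indicator (Ssoft u) (fun _ => (1 : ℝ)) q := by
  by_cases hp : p ∈ Ssoft s
  · rw [Set.indicator_of_mem hp, Set.indicator_of_mem (h hp)]
  · rw [Set.indicator_of_notMem hp]
    exact Set.indicator_nonneg (fun _ _ => zero_le_one) _

/-- Shift-continuity of the softened distance `d^t`. -/
theorem stmt2 (δ : ℝ) (hδ : 0 < δ) (a a' t ε r r' : ℝ)
    (hε : 0 ≤ ε) (hr : |r| ≤ ε) (hr' : |r'| ≤ ε) :
    dsoft δ (t + ε) a a' ≤ dsoft δ t (a + r) (a' + r') ∧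
    dsoft δ t (a + r) (a' + r') ≤ dsoft δ (t - ε) a a' := by
  have hr1 := abs_le.mp hr
  have hr2 := abs_le.mp hr'
  constructor
  · unfold dsoft
    apply mul_le_mul_of_nonneg_left _ hδ.le
    apply Summable.tsum_le_tsum _ (summable_dsoft δ hδ _ a a') (summable_dsoft δ hδ _ (a+r) (a'+r'))
    intro k
    apply indicator_le_of_imp
    rintro (⟨h1, h2⟩ | ⟨h1, h2⟩) <;> dsimp only at h1 h2
    · exact Or.inl ⟨by dsimp only; linarith [hr1.2], by dsimp only; linarith [hr2.1]⟩
    · exact Or.inr ⟨by dsimp only; linarith [hr1.1], by dsimp only; linarith [hr2.2]⟩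
  · unfold dsoft
    apply mul_le_mul_of_nonneg_left _ hδ.le
    apply Summable.tsum_le_tsum _ (summable_dsoft δ hδ _ (a+r) (a'+r')) (summable_dsoft δ hδ _ a a')
    intro k
    apply indicator_le_of_imp
    rintro (⟨h1, h2⟩ | ⟨h1, h2⟩) <;> dsimp only at h1 h2
    · exact Or.inl ⟨by dsimp only; linarith [hr1.1], by dsimp only; linarith [hr2.2]⟩
    · exact Or.inr ⟨by dsimp only; linarith [hr1.2], by dsimp only; linarith [hr2.1]⟩
end

section
/- Let δ > 0 and d^t be the softened quantized distance d^t(a,a') = δ · Σ_{k ∈ ℤ} 1_{S^t}(a - kδ, a' - kδ) where S^t = {(a,a') : a < -t, a' > t} ∪ {(a,a') : a > t, a' < -t}. Then for all a, a' ∈ ℝ and all s, t ∈ ℝ, |d^t(a, a') - d^s(a, a')| ≤ 4(δ + |t - s|). -/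
private lemma mem_Ssoft_iff (δ t a a' : ℝ) (k : ℤ) :
    ((a - k * δ, a' - k * δ) : ℝ × ℝ) ∈ Ssoft t ↔
      (a + t < k * δ ∧ (k : ℝ) * δ < a' - t) ∨ (a' + t < k * δ ∧ (k : ℝ) * δ < a - t) := by
  simp only [Ssoft, Set.mem_union, Set.mem_setOf_eq]
  constructor <;> rintro (⟨h1, h2⟩ | ⟨h1, h2⟩)
  · exact Or.inl ⟨by linarith, by linarith⟩
  · exact Or.inr ⟨by linarith, by linarith⟩
  · exact Or.inl ⟨by linarith, by linarith⟩
  · exact Or.inr ⟨by linarith, by linarith⟩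

private def Kset (δ t a a' : ℝ) : Set ℤ :=
  {k | ((a - k * δ, a' - k * δ) : ℝ × ℝ) ∈ Ssoft t}

private lemma Kset_finite (δ : ℝ) (hδ : 0 < δ) (t a a' : ℝ) : (Kset δ t a a').Finite := by
  apply Set.Finite.subset
    (Set.finite_Icc (⌊(min (a + t) (a' + t)) / δ⌋) ⌈(max (a' - t) (a - t)) / δ⌉)
  intro k hk
  rw [Set.mem_Icc]
  have hk' := (mem_Ssoft_iff δ t a a' k).mp hk
  constructor
  · have h1 : min (a + t) (a' + t) < (k : ℝ) * δ := by
      rcases hk' with ⟨h, _⟩ | ⟨h, _⟩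
      · exact lt_of_le_of_lt (min_le_left _ _) h
      · exact lt_of_le_of_lt (min_le_right _ _) h
    have : (min (a + t) (a' + t)) / δ < (k : ℝ) := (div_lt_iff₀ hδ).mpr h1
    exact (Int.floor_lt.mpr this).le
  · have h1 : (k : ℝ) * δ < max (a' - t) (a - t) := by
      rcases hk' with ⟨_, h⟩ | ⟨_, h⟩
      · exact lt_of_lt_of_le h (le_max_left _ _)
      · exact lt_of_lt_of_le h (le_max_right _ _)
    have : (k : ℝ) < (max (a' - t) (a - t)) / δ := (lt_div_iff₀ hδ).mpr h1
    exact (Int.lt_ceil.mpr this).le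

private lemma dsoft_eq (δ : ℝ) (hδ : 0 < δ) (t a a' : ℝ) :
    dsoft δ t a a' = δ * (((Kset_finite δ hδ t a a').toFinset.card : ℝ)) := by
  unfold dsoft
  congr 1
  rw [tsum_eq_sum (s := (Kset_finite δ hδ t a a').toFinset)
    (fun k hk => Set.indicator_of_notMem (by
      rw [Set.Finite.mem_toFinset] at hk; exact hk) _)]
  rw [Finset.sum_congr rfl (fun k hk => Set.indicator_of_mem (by
      rw [Set.Finite.mem_toFinset] at hk; exact hk) _)]
  simp

private lemma card_Icc_bound (δ : ℝ) (hδ : 0 < δ) (c : ℝ) (hc : 0 ≤ c) (m n : ℤ)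
    (h : δ * ((n : ℝ) - m) ≤ c) : δ * ((Finset.Icc m n).card : ℝ) ≤ c + δ := by
  rcases le_or_gt m n with hmn | hmn
  · rw [Int.card_Icc]
    have h0 : (0 : ℤ) ≤ n + 1 - m := by omega
    have : (((n + 1 - m).toNat : ℕ) : ℝ) = ((n : ℝ) + 1 - m) := by
      rw [← Int.cast_natCast, Int.toNat_of_nonneg h0]; push_cast; ring
    rw [this]
    nlinarith
  · rw [Finset.Icc_eq_empty (by exact_mod_cast not_le.mpr hmn)]
    simp only [Finset.card_empty, Nat.cast_zero, mul_zero]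
    linarith

private lemma mem_Ioc_piece (δ : ℝ) (hδ : 0 < δ) (x y : ℝ) (k : ℤ)
    (h1 : x < k * δ) (h2 : (k : ℝ) * δ ≤ y) : k ∈ Finset.Icc (⌊x / δ⌋ + 1) ⌊y / δ⌋ := by
  rw [Finset.mem_Icc]
  refine ⟨Int.add_one_le_iff.mpr (Int.floor_lt.mpr ((div_lt_iff₀ hδ).mpr h1)),
    Int.le_floor.mpr ((le_div_iff₀ hδ).mpr h2)⟩

private lemma mem_Ico_piece (δ : ℝ) (hδ : 0 < δ) (x y : ℝ) (k : ℤ)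
    (h1 : x ≤ k * δ) (h2 : (k : ℝ) * δ < y) : k ∈ Finset.Icc ⌈x / δ⌉ (⌈y / δ⌉ - 1) := by
  rw [Finset.mem_Icc]
  refine ⟨Int.ceil_le.mpr ((div_le_iff₀ hδ).mpr h1),
    Int.le_sub_one_iff.mpr (Int.lt_ceil.mpr ((lt_div_iff₀ hδ).mpr h2))⟩

private lemma card_Ioc_piece (δ : ℝ) (hδ : 0 < δ) (x y : ℝ) :
    δ * ((Finset.Icc (⌊x / δ⌋ + 1) ⌊y / δ⌋).card : ℝ) ≤ |y - x| + δ := by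
  apply card_Icc_bound δ hδ _ (abs_nonneg _)
  have h1 : (⌊y / δ⌋ : ℝ) * δ ≤ y := (le_div_iff₀ hδ).mp (Int.floor_le _)
  have h2 : x < ((⌊x / δ⌋ + 1 : ℤ) : ℝ) * δ := by
    rw [← div_lt_iff₀ hδ]; push_cast; exact Int.lt_floor_add_one _
  have h3 : y - x ≤ |y - x| := le_abs_self _
  push_cast at h2 ⊢
  nlinarith

private lemma card_Ico_piece (δ : ℝ) (hδ : 0 < δ) (x y : ℝ) :
    δ * ((Finset.Icc ⌈x / δ⌉ (⌈y / δ⌉ - 1)).card : ℝ) ≤ |y - x| + δ := by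
  apply card_Icc_bound δ hδ _ (abs_nonneg _)
  have h1 : (⌈y / δ⌉ : ℝ) * δ < y + δ := by
    have : (⌈y / δ⌉ : ℝ) < y / δ + 1 := Int.ceil_lt_add_one _
    have h2 : (⌈y / δ⌉ : ℝ) < (y + δ) / δ := by
      rw [add_div, div_self hδ.ne']; linarith
    exact (lt_div_iff₀ hδ).mp h2
  have h2 : x ≤ (⌈x / δ⌉ : ℝ) * δ := (div_le_iff₀ hδ).mp (Int.le_ceil _)
  have h3 : y - x ≤ |y - x| := le_abs_self _
  push_cast
  nlinarith

private lemma sdiff_card_bound (δ : ℝ) (hδ : 0 < δ) (a a' u v : ℝ) :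
    δ * ((((Kset_finite δ hδ u a a').toFinset \ (Kset_finite δ hδ v a a').toFinset).card : ℝ))
      ≤ 4 * (δ + |u - v|) := by
  set J1 := Finset.Icc (⌊(a + u) / δ⌋ + 1) ⌊(a + v) / δ⌋ with hJ1
  set J2 := Finset.Icc ⌈(a' - v) / δ⌉ (⌈(a' - u) / δ⌉ - 1) with hJ2
  set J3 := Finset.Icc (⌊(a' + u) / δ⌋ + 1) ⌊(a' + v) / δ⌋ with hJ3
  set J4 := Finset.Icc ⌈(a - v) / δ⌉ (⌈(a - u) / δ⌉ - 1) with hJ4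
  have hsub : (Kset_finite δ hδ u a a').toFinset \ (Kset_finite δ hδ v a a').toFinset
      ⊆ J1 ∪ J2 ∪ J3 ∪ J4 := by
    intro k hk
    rw [Finset.mem_sdiff, Set.Finite.mem_toFinset, Set.Finite.mem_toFinset] at hk
    obtain ⟨hkA, hkB⟩ := hk
    rw [Kset, Set.mem_setOf_eq, mem_Ssoft_iff] at hkA
    rw [Kset, Set.mem_setOf_eq, mem_Ssoft_iff] at hkB
    simp only [Finset.mem_union]
    rcases hkA with ⟨h1, h2⟩ | ⟨h1, h2⟩
    · have hnot : (k : ℝ) * δ ≤ a + v ∨ a' - v ≤ (k : ℝ) * δ := by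
        by_contra hcon
        push_neg at hcon
        exact hkB (Or.inl ⟨hcon.1, hcon.2⟩)
      rcases hnot with h | h
      · exact Or.inl (Or.inl (Or.inl (mem_Ioc_piece δ hδ _ _ k h1 h)))
      · exact Or.inl (Or.inl (Or.inr (mem_Ico_piece δ hδ _ _ k h h2)))
    · have hnot : (k : ℝ) * δ ≤ a' + v ∨ a - v ≤ (k : ℝ) * δ := by
        by_contra hcon
        push_neg at hcon
        exact hkB (Or.inr ⟨hcon.1, hcon.2⟩)
      rcases hnot with h | h
      · exact Or.inl (Or.inr (mem_Ioc_piece δ hδ _ _ k h1 h))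
      · exact Or.inr (mem_Ico_piece δ hδ _ _ k h h2)
  have hcard : ((((Kset_finite δ hδ u a a').toFinset \ (Kset_finite δ hδ v a a').toFinset).card : ℝ))
      ≤ (J1.card : ℝ) + J2.card + J3.card + J4.card := by
    have h1 := Finset.card_le_card hsub
    have h2 : (J1 ∪ J2 ∪ J3 ∪ J4).card ≤ J1.card + J2.card + J3.card + J4.card := by
      calc (J1 ∪ J2 ∪ J3 ∪ J4).card ≤ (J1 ∪ J2 ∪ J3).card + J4.card := Finset.card_union_le _ _
        _ ≤ (J1 ∪ J2).card + J3.card + J4.card := by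
            have := Finset.card_union_le (J1 ∪ J2) J3; omega
        _ ≤ J1.card + J2.card + J3.card + J4.card := by
            have := Finset.card_union_le J1 J2; omega
    have := le_trans h1 h2
    exact_mod_cast this
  have b1 : δ * (J1.card : ℝ) ≤ |u - v| + δ := by
    have := card_Ioc_piece δ hδ (a + u) (a + v)
    have heq : |(a + v) - (a + u)| = |u - v| := by rw [abs_sub_comm]; ring_nf
    rw [heq] at this; exact this
  have b2 : δ * (J2.card : ℝ) ≤ |u - v| + δ := by
    have := card_Ico_piece δ hδ (a' - v) (a' - u)
    have heq : |(a' - u) - (a' - v)| = |u - v| := by rw [abs_sub_comm]; ring_nf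
    rw [heq] at this; exact this
  have b3 : δ * (J3.card : ℝ) ≤ |u - v| + δ := by
    have := card_Ioc_piece δ hδ (a' + u) (a' + v)
    have heq : |(a' + v) - (a' + u)| = |u - v| := by rw [abs_sub_comm]; ring_nf
    rw [heq] at this; exact this
  have b4 : δ * (J4.card : ℝ) ≤ |u - v| + δ := by
    have := card_Ico_piece δ hδ (a - v) (a - u)
    have heq : |(a - u) - (a - v)| = |u - v| := by rw [abs_sub_comm]; ring_nf
    rw [heq] at this; exact this
  have hm := mul_le_mul_of_nonneg_left hcard hδ.le
  nlinarith [hm, b1, b2, b3, b4]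

/-- Variation of the softened distance in its softening parameter. -/
theorem stmt3 (δ : ℝ) (hδ : 0 < δ) (a a' s t : ℝ) :
    |dsoft δ t a a' - dsoft δ s a a'| ≤ 4 * (δ + |t - s|) := by
  rw [dsoft_eq δ hδ t a a', dsoft_eq δ hδ s a a', ← mul_sub]
  set A := (Kset_finite δ hδ t a a').toFinset with hA
  set B := (Kset_finite δ hδ s a a').toFinset with hB
  have hAB : (A.card : ℝ) - B.card ≤ ((A \ B).card : ℝ) := by
    have := Finset.card_le_card_sdiff_add_card (s := A) (t := B)
    have : (A.card : ℝ) ≤ ((A \ B).card : ℝ) + B.card := by exact_mod_cast this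
    linarith
  have hBA : (B.card : ℝ) - A.card ≤ ((B \ A).card : ℝ) := by
    have := Finset.card_le_card_sdiff_add_card (s := B) (t := A)
    have : (B.card : ℝ) ≤ ((B \ A).card : ℝ) + A.card := by exact_mod_cast this
    linarith
  have k1 := sdiff_card_bound δ hδ a a' t s
  have k2 := sdiff_card_bound δ hδ a a' s t
  rw [abs_sub_comm s t] at k2
  rw [abs_mul, abs_of_pos hδ]
  rcases abs_cases ((A.card : ℝ) - B.card) with ⟨h, _⟩ | ⟨h, _⟩ <;> rw [h]
  · nlinarith
  · nlinarith
end

section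
/- Let δ > 0 and d^t be the softened quantized distance associated with resolution δ. Then for all a, a' ∈ ℝ and all t ∈ ℝ, |d^t(a, a') - |a - a'|| ≤ 4(δ + |t|). -/
lemma card_lb (x y : ℝ) : y - x - 1 ≤ ((Finset.Ioo ⌊x⌋ ⌈y⌉).card : ℝ) := by
  rw [Int.card_Ioo]
  have h1 : (⌈y⌉ - ⌊x⌋ - 1 : ℤ) ≤ ((⌈y⌉ - ⌊x⌋ - 1).toNat : ℤ) := Int.self_le_toNat _
  have h2 : ((⌈y⌉ - ⌊x⌋ - 1 : ℤ) : ℝ) ≤ (((⌈y⌉ - ⌊x⌋ - 1).toNat : ℤ) : ℝ) := by exact_mod_cast h1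
  have hy := Int.le_ceil y
  have hx := Int.floor_le x
  push_cast at h2 ⊢
  linarith

lemma card_ub (x y : ℝ) : ((Finset.Ioo ⌊x⌋ ⌈y⌉).card : ℝ) ≤ max 0 (y - x + 1) := by
  rw [Int.card_Ioo]
  rcases le_or_gt (⌈y⌉ - ⌊x⌋ - 1) 0 with h | h
  · rw [Int.toNat_of_nonpos h]
    simpa using le_max_left 0 (y - x + 1)
  · have hy := Int.ceil_lt_add_one y
    have hx := Int.lt_floor_add_one x
    refine le_trans ?_ (le_max_right 0 (y - x + 1))
    have heq : (((⌈y⌉ - ⌊x⌋ - 1).toNat : ℤ) : ℝ) = ((⌈y⌉ - ⌊x⌋ - 1 : ℤ) : ℝ) := by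
      exact_mod_cast Int.toNat_of_nonneg h.le
    push_cast at heq
    linarith

/-- Deviation of the softened distance from the true distance. -/
theorem stmt4 (δ : ℝ) (hδ : 0 < δ) (a a' t : ℝ) :
    abs (dsoft δ t a a' - |a - a'|) ≤ 4 * (δ + |t|) := by
  set x1 := (a + t) / δ with hx1
  set y1 := (a' - t) / δ with hy1
  set x2 := (a' + t) / δ with hx2
  set y2 := (a - t) / δ with hy2
  set F1 := Finset.Ioo ⌊x1⌋ ⌈y1⌉ with hF1
  set F2 := Finset.Ioo ⌊x2⌋ ⌈y2⌉ with hF2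
  have hmem : ∀ k : ℤ, ((a - k * δ, a' - k * δ) : ℝ × ℝ) ∈ Ssoft t ↔ k ∈ F1 ∪ F2 := by
    intro k
    simp only [hF1, hF2, Finset.mem_union, Finset.mem_Ioo, Int.floor_lt, Int.lt_ceil,
      Ssoft, Set.mem_union, Set.mem_setOf_eq, hx1, hy1, hx2, hy2, div_lt_iff₀ hδ,
      lt_div_iff₀ hδ]
    constructor
    · rintro (⟨h1, h2⟩ | ⟨h1, h2⟩)
      · exact Or.inl ⟨by linarith, by linarith⟩
      · exact Or.inr ⟨by linarith, by linarith⟩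
    · rintro (⟨h1, h2⟩ | ⟨h1, h2⟩)
      · exact Or.inl ⟨by linarith, by linarith⟩
      · exact Or.inr ⟨by linarith, by linarith⟩
  have hsum : (∑' k : ℤ, Set.indicator (Ssoft t) (fun _ => (1 : ℝ)) (a - k * δ, a' - k * δ))
      = ((F1 ∪ F2).card : ℝ) := by
    rw [tsum_eq_sum (s := F1 ∪ F2)
      (fun k hk => Set.indicator_of_notMem (fun h => hk ((hmem k).mp h)) _)]
    rw [Finset.sum_congr rfl (fun k hk => Set.indicator_of_mem ((hmem k).mpr hk) _)]
    simp
  have hd : dsoft δ t a a' = δ * ((F1 ∪ F2).card : ℝ) := by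
    rw [dsoft, hsum]
  -- lower bounds
  have hsub1 : (F1.card : ℝ) ≤ ((F1 ∪ F2).card : ℝ) := by
    exact_mod_cast Finset.card_le_card (Finset.subset_union_left)
  have hsub2 : (F2.card : ℝ) ≤ ((F1 ∪ F2).card : ℝ) := by
    exact_mod_cast Finset.card_le_card (Finset.subset_union_right)
  have hcardU : ((F1 ∪ F2).card : ℝ) ≤ (F1.card : ℝ) + (F2.card : ℝ) := by
    exact_mod_cast Finset.card_union_le F1 F2
  have hlb1 := card_lb x1 y1
  have hlb2 := card_lb x2 y2
  have hub1 := card_ub x1 y1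
  have hub2 := card_ub x2 y2
  have e1 : δ * (y1 - x1) = a' - a - 2 * t := by
    rw [hx1, hy1]; field_simp; ring
  have e2 : δ * (y2 - x2) = a - a' - 2 * t := by
    rw [hx2, hy2]; field_simp; ring
  have hL1 : a' - a - 2 * t - δ ≤ δ * ((F1 ∪ F2).card : ℝ) := by
    have h1 := mul_le_mul_of_nonneg_left hlb1 hδ.le
    have h2 := mul_le_mul_of_nonneg_left hsub1 hδ.le
    nlinarith
  have hL2 : a - a' - 2 * t - δ ≤ δ * ((F1 ∪ F2).card : ℝ) := by
    have h1 := mul_le_mul_of_nonneg_left hlb2 hδ.le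
    have h2 := mul_le_mul_of_nonneg_left hsub2 hδ.le
    nlinarith
  have hU : δ * ((F1 ∪ F2).card : ℝ)
      ≤ max 0 (a' - a - 2 * t + δ) + max 0 (a - a' - 2 * t + δ) := by
    have h1 := mul_le_mul_of_nonneg_left hub1 hδ.le
    have h2 := mul_le_mul_of_nonneg_left hub2 hδ.le
    have h3 := mul_le_mul_of_nonneg_left hcardU hδ.le
    rw [mul_max_of_nonneg _ _ hδ.le] at h1 h2
    have e1' : δ * (y1 - x1 + 1) = a' - a - 2 * t + δ := by linarith [e1]
    have e2' : δ * (y2 - x2 + 1) = a - a' - 2 * t + δ := by linarith [e2]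
    rw [e1', mul_zero] at h1
    rw [e2', mul_zero] at h2
    linarith
  have ht1 := le_abs_self t
  have ht2 := neg_abs_le t
  have ht0 := abs_nonneg t
  rw [hd, abs_sub_le_iff]
  rcases abs_cases (a - a') with ⟨h, h'⟩ | ⟨h, h'⟩
  · constructor
    · have hm1 : max 0 (a' - a - 2 * t + δ) ≤ 2 * |t| + δ :=
        max_le (by linarith) (by linarith)
      have hm2 : max 0 (a - a' - 2 * t + δ) ≤ |a - a'| + 2 * |t| + δ :=
        max_le (by linarith) (by linarith)
      linarith
    · linarith
  · constructor
    · have hm1 : max 0 (a' - a - 2 * t + δ) ≤ |a - a'| + 2 * |t| + δ :=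
        max_le (by linarith) (by linarith)
      have hm2 : max 0 (a - a' - 2 * t + δ) ≤ 2 * |t| + δ :=
        max_le (by linarith) (by linarith)
      linarith
    · linarith
end

section
/- Let p ≥ 1, η > 0, P ≥ 1, m ∈ ℕ, and a, a', r, r' ∈ ℝ^m with max(‖r‖_p, ‖r'‖_p) ≤ η m^{1/p}. Define D^t(a, a') = (1/m) Σ_{i=1}^m d^t(a_i, a'_i) where d^t is the softened quantized distance with resolution δ > 0. Then for every t ∈ ℝ: D^{t + η P^{1/p}}(a, a') - 8(δ/P + η) ≤ D^t(a + r, a' + r') ≤ D^{t - η P^{1/p}}(a, a') + 8(δ/P + η). -/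
/-- Averaged softened distance over `m` coordinates. -/
noncomputable def Dsoft (δ t : ℝ) {m : ℕ} (a a' : Fin m → ℝ) : ℝ :=
  (1 / (m : ℝ)) * ∑ i, dsoft δ t (a i) (a' i)

/-- The `ℓ_p` norm on `Fin m → ℝ`. -/
noncomputable def lpNorm (p : ℝ) {m : ℕ} (r : Fin m → ℝ) : ℝ :=
  (∑ i, |r i| ^ p) ^ (1 / p)

namespace Stmt7aux

/-- The per-coordinate error allowance: `|r| - ε + δ` if `|r| > ε`, else `0`. -/
noncomputable def eBd (ε δ r : ℝ) : ℝ := if ε < |r| then |r| - ε + δ else 0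

lemma eBd_neg (ε δ x : ℝ) : eBd ε δ (-x) = eBd ε δ x := by simp [eBd]

/-- The set of integers `k` whose shifted pair lies in `Ssoft t`. -/
def Kset (δ t a a' : ℝ) : Set ℤ :=
  {k | (a + t < k * δ ∧ (k : ℝ) * δ < a' - t) ∨ (a' + t < k * δ ∧ (k : ℝ) * δ < a - t)}

lemma Kset_finite {δ : ℝ} (hδ : 0 < δ) (t a a' : ℝ) : (Kset δ t a a').Finite := by
  apply Set.Finite.subset
    (Set.finite_Icc ⌈min (a + t) (a' + t) / δ⌉ ⌊max (a' - t) (a - t) / δ⌋)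
  have h1 : min (a + t) (a' + t) ≤ a + t := min_le_left _ _
  have h2 : min (a + t) (a' + t) ≤ a' + t := min_le_right _ _
  have h3 : a' - t ≤ max (a' - t) (a - t) := le_max_left _ _
  have h4 : a - t ≤ max (a' - t) (a - t) := le_max_right _ _
  rintro k (⟨ha, hb⟩ | ⟨ha, hb⟩) <;>
    exact ⟨by rw [Int.ceil_le, div_le_iff₀ hδ]; linarith,
           by rw [Int.le_floor, le_div_iff₀ hδ]; linarith⟩

lemma dsoft_eq {δ : ℝ} (hδ : 0 < δ) (t a a' : ℝ) :
    dsoft δ t a a' = δ * (((Kset_finite hδ t a a').toFinset.card : ℝ)) := by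
  unfold dsoft
  congr 1
  set F := (Kset_finite hδ t a a').toFinset with hF
  have hmem : ∀ k : ℤ, ((a - k * δ, a' - k * δ) ∈ Ssoft t) ↔ k ∈ Kset δ t a a' := by
    intro k
    simp only [Ssoft, Set.mem_union, Set.mem_setOf_eq, Kset]
    constructor <;> rintro (⟨h1, h2⟩ | ⟨h1, h2⟩)
    · exact Or.inl ⟨by linarith, by linarith⟩
    · exact Or.inr ⟨by linarith, by linarith⟩
    · exact Or.inl ⟨by linarith, by linarith⟩
    · exact Or.inr ⟨by linarith, by linarith⟩
  have hf : ∀ k : ℤ, Set.indicator (Ssoft t) (fun _ => (1:ℝ)) (a - k * δ, a' - k * δ)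
      = if k ∈ F then (1:ℝ) else 0 := by
    intro k
    classical
    rw [Set.indicator_apply]
    simp only [hF, Set.Finite.mem_toFinset]
    exact if_congr (hmem k) rfl rfl
  calc (∑' k : ℤ, Set.indicator (Ssoft t) (fun _ => (1:ℝ)) (a - k * δ, a' - k * δ))
      = ∑' k : ℤ, (if k ∈ F then (1:ℝ) else 0) := tsum_congr hf
    _ = ∑ k ∈ F, (if k ∈ F then (1:ℝ) else 0) := tsum_eq_sum (fun k hk => if_neg hk)
    _ = ∑ k ∈ F, (1:ℝ) := Finset.sum_congr rfl (fun k hk => if_pos hk)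
    _ = F.card := by simp

lemma mem_Ioc' {δ u v : ℝ} {k : ℤ} (hδ : 0 < δ) (h1 : u < k * δ) (h2 : (k : ℝ) * δ ≤ v) :
    k ∈ Finset.Ioc ⌊u / δ⌋ ⌊v / δ⌋ := by
  rw [Finset.mem_Ioc]
  exact ⟨Int.floor_lt.mpr ((div_lt_iff₀ hδ).mpr h1),
         Int.le_floor.mpr ((le_div_iff₀ hδ).mpr h2)⟩

lemma mem_Ico' {δ u v : ℝ} {k : ℤ} (hδ : 0 < δ) (h1 : u ≤ k * δ) (h2 : (k : ℝ) * δ < v) :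
    k ∈ Finset.Ico ⌈u / δ⌉ ⌈v / δ⌉ := by
  rw [Finset.mem_Ico]
  exact ⟨Int.ceil_le.mpr ((div_le_iff₀ hδ).mpr (by linarith)),
         Int.lt_ceil.mpr ((lt_div_iff₀ hδ).mpr h2)⟩

lemma Ioc_empty {δ u v : ℝ} (hδ : 0 < δ) (h : v ≤ u) : Finset.Ioc ⌊u / δ⌋ ⌊v / δ⌋ = ∅ :=
  Finset.Ioc_eq_empty (not_lt.mpr (Int.floor_le_floor (div_le_div_of_nonneg_right h hδ.le)))

lemma Ico_empty {δ u v : ℝ} (hδ : 0 < δ) (h : v ≤ u) : Finset.Ico ⌈u / δ⌉ ⌈v / δ⌉ = ∅ :=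
  Finset.Ico_eq_empty (not_lt.mpr (Int.ceil_le_ceil (div_le_div_of_nonneg_right h hδ.le)))

lemma card_Ioc_le {δ u v : ℝ} (hδ : 0 < δ) (huv : u ≤ v) :
    δ * ((Finset.Ioc ⌊u / δ⌋ ⌊v / δ⌋).card : ℝ) ≤ v - u + δ := by
  rw [Int.card_Ioc]
  have hfl : (⌊u / δ⌋ : ℝ) > u / δ - 1 := by linarith [Int.sub_one_lt_floor (u / δ)]
  have hfv : (⌊v / δ⌋ : ℝ) ≤ v / δ := Int.floor_le _
  have h1 : (((⌊v / δ⌋ - ⌊u / δ⌋).toNat : ℤ) : ℝ) ≤ (v - u) / δ + 1 := by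
    have hd : (v - u) / δ = v / δ - u / δ := by ring
    rcases le_or_gt (⌊v / δ⌋ - ⌊u / δ⌋) 0 with h | h
    · have : ((⌊v / δ⌋ - ⌊u / δ⌋).toNat : ℤ) = 0 := by omega
      rw [this]
      push_cast
      rw [hd]
      have : 0 ≤ (v - u) / δ := div_nonneg (by linarith) hδ.le
      linarith [this.trans_eq hd]
    · have : ((⌊v / δ⌋ - ⌊u / δ⌋).toNat : ℤ) = ⌊v / δ⌋ - ⌊u / δ⌋ := by omega
      rw [this]; push_cast; rw [hd]; linarith
  have h2 : ((⌊v / δ⌋ - ⌊u / δ⌋).toNat : ℝ) ≤ (v - u) / δ + 1 := by exact_mod_cast h1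
  calc δ * ((⌊v / δ⌋ - ⌊u / δ⌋).toNat : ℝ) ≤ δ * ((v - u) / δ + 1) :=
        mul_le_mul_of_nonneg_left h2 hδ.le
    _ = v - u + δ := by field_simp

lemma card_Ico_le {δ u v : ℝ} (hδ : 0 < δ) (huv : u ≤ v) :
    δ * ((Finset.Ico ⌈u / δ⌉ ⌈v / δ⌉).card : ℝ) ≤ v - u + δ := by
  rw [Int.card_Ico]
  have hcu : u / δ ≤ (⌈u / δ⌉ : ℝ) := Int.le_ceil _
  have hcv : (⌈v / δ⌉ : ℝ) < v / δ + 1 := Int.ceil_lt_add_one _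
  have h1 : (((⌈v / δ⌉ - ⌈u / δ⌉).toNat : ℤ) : ℝ) ≤ (v - u) / δ + 1 := by
    have hd : (v - u) / δ = v / δ - u / δ := by ring
    rcases le_or_gt (⌈v / δ⌉ - ⌈u / δ⌉) 0 with h | h
    · have h0 : ((⌈v / δ⌉ - ⌈u / δ⌉).toNat : ℤ) = 0 := by omega
      rw [h0]; push_cast; rw [hd]
      have : 0 ≤ (v - u) / δ := div_nonneg (by linarith) hδ.le
      linarith
    · have h0 : ((⌈v / δ⌉ - ⌈u / δ⌉).toNat : ℤ) = ⌈v / δ⌉ - ⌈u / δ⌉ := by omega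
      rw [h0]; push_cast; rw [hd]; linarith
  have h2 : ((⌈v / δ⌉ - ⌈u / δ⌉).toNat : ℝ) ≤ (v - u) / δ + 1 := by exact_mod_cast h1
  calc δ * ((⌈v / δ⌉ - ⌈u / δ⌉).toNat : ℝ) ≤ δ * ((v - u) / δ + 1) :=
        mul_le_mul_of_nonneg_left h2 hδ.le
    _ = v - u + δ := by field_simp

lemma pair_bound {δ ε : ℝ} (hδ : 0 < δ) (hε : 0 ≤ ε) (r u₁ u₂ v₁ v₂ : ℝ)
    (h1 : v₁ = u₁ - ε - r) (h2 : v₂ = u₂ + r - ε) :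
    δ * ((Finset.Ioc ⌊u₁ / δ⌋ ⌊v₁ / δ⌋).card : ℝ)
      + δ * ((Finset.Ico ⌈u₂ / δ⌉ ⌈v₂ / δ⌉).card : ℝ) ≤ eBd ε δ r := by
  unfold eBd
  split_ifs with h
  · rcases lt_abs.mp h with hr | hr
    · rw [Ioc_empty hδ (by linarith)]
      have := card_Ico_le (u := u₂) (v := v₂) hδ (by linarith)
      rw [abs_of_pos (by linarith : (0:ℝ) < r)]
      simp only [Finset.card_empty, Nat.cast_zero, mul_zero, zero_add]
      linarith
    · rw [Ico_empty hδ (by linarith)]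
      have := card_Ioc_le (u := u₁) (v := v₁) hδ (by linarith)
      rw [abs_of_neg (by linarith : r < 0)]
      simp only [Finset.card_empty, Nat.cast_zero, mul_zero, add_zero]
      linarith
  · push_neg at h
    have hrle : -ε ≤ r := neg_le_of_abs_le h
    have hrle' : r ≤ ε := le_of_abs_le h
    rw [Ioc_empty hδ (by linarith), Ico_empty hδ (by linarith)]
    simp

/-- Key per-coordinate estimate. -/
lemma key {δ ε : ℝ} (hδ : 0 < δ) (hε : 0 ≤ ε) (t a a' r r' : ℝ) :
    dsoft δ t (a + r) (a' + r') ≤ dsoft δ (t - ε) a a' + eBd ε δ r + eBd ε δ r' := by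
  rw [dsoft_eq hδ, dsoft_eq hδ]
  set F₁ := (Kset_finite hδ t (a + r) (a' + r')).toFinset with hF₁
  set F₂ := (Kset_finite hδ (t - ε) a a').toFinset with hF₂
  set LA := Finset.Ioc ⌊(a + r + t) / δ⌋ ⌊(a + t - ε) / δ⌋ with hLA
  set RA := Finset.Ico ⌈(a' - t + ε) / δ⌉ ⌈(a' + r' - t) / δ⌉ with hRA
  set LB := Finset.Ioc ⌊(a' + r' + t) / δ⌋ ⌊(a' + t - ε) / δ⌋ with hLB
  set RB := Finset.Ico ⌈(a - t + ε) / δ⌉ ⌈(a + r - t) / δ⌉ with hRB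
  have hsub : F₁ ⊆ (((F₂ ∪ LA) ∪ RA) ∪ LB) ∪ RB := by
    intro k hk
    have hk' : k ∈ Kset δ t (a + r) (a' + r') := (Set.Finite.mem_toFinset _).mp hk
    simp only [Finset.mem_union]
    rcases hk' with ⟨h1, h2⟩ | ⟨h1, h2⟩
    · by_cases hL : (k : ℝ) * δ ≤ a + t - ε
      · exact Or.inl (Or.inl (Or.inl (Or.inr (mem_Ioc' hδ (by linarith) hL))))
      · by_cases hR : a' - t + ε ≤ (k : ℝ) * δ
        · exact Or.inl (Or.inl (Or.inr (mem_Ico' hδ hR (by linarith))))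
        · refine Or.inl (Or.inl (Or.inl (Or.inl ?_)))
          rw [hF₂, Set.Finite.mem_toFinset]
          exact Or.inl ⟨by push_neg at hL; linarith, by push_neg at hR; linarith⟩
    · by_cases hL : (k : ℝ) * δ ≤ a' + t - ε
      · exact Or.inl (Or.inr (mem_Ioc' hδ (by linarith) hL))
      · by_cases hR : a - t + ε ≤ (k : ℝ) * δ
        · exact Or.inr (mem_Ico' hδ hR (by linarith))
        · refine Or.inl (Or.inl (Or.inl (Or.inl ?_)))
          rw [hF₂, Set.Finite.mem_toFinset]
          exact Or.inr ⟨by push_neg at hL; linarith, by push_neg at hR; linarith⟩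
  have hcard : F₁.card ≤ F₂.card + LA.card + RA.card + LB.card + RB.card := by
    have c0 := Finset.card_le_card hsub
    have c1 := Finset.card_union_le (((F₂ ∪ LA) ∪ RA) ∪ LB) RB
    have c2 := Finset.card_union_le ((F₂ ∪ LA) ∪ RA) LB
    have c3 := Finset.card_union_le (F₂ ∪ LA) RA
    have c4 := Finset.card_union_le F₂ LA
    omega
  have hcardR : (F₁.card : ℝ) ≤ F₂.card + LA.card + RA.card + LB.card + RB.card := by
    exact_mod_cast hcard
  have pb1 := pair_bound hδ hε r (a + r + t) (a - t + ε) (a + t - ε) (a + r - t)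
    (by ring) (by ring)
  have pb2 := pair_bound hδ hε r' (a' + r' + t) (a' - t + ε) (a' + t - ε) (a' + r' - t)
    (by ring) (by ring)
  rw [← hLA, ← hRB] at pb1
  rw [← hLB, ← hRA] at pb2
  nlinarith [mul_le_mul_of_nonneg_left hcardR hδ.le]

lemma eBd_le {p ε δ : ℝ} (hp : 1 ≤ p) (hε : 0 < ε) (hδ : 0 ≤ δ) (x : ℝ) :
    eBd ε δ x ≤ |x| ^ p * (1 / ε ^ (p - 1) + δ / ε ^ p) := by
  unfold eBd
  split_ifs with h
  · have hx : 0 < |x| := hε.trans h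
    have h1 : ε ^ (p - 1) ≤ |x| ^ (p - 1) := Real.rpow_le_rpow hε.le h.le (by linarith)
    have h2 : ε ^ p ≤ |x| ^ p := Real.rpow_le_rpow hε.le h.le (by linarith)
    have hε1 : (0:ℝ) < ε ^ (p - 1) := Real.rpow_pos_of_pos hε _
    have hεp : (0:ℝ) < ε ^ p := Real.rpow_pos_of_pos hε _
    have hxp : |x| * |x| ^ (p - 1) = |x| ^ p := by
      have h := (Real.rpow_add hx 1 (p - 1)).symm
      rw [Real.rpow_one] at h
      rw [h, show (1:ℝ) + (p - 1) = p by ring]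
    have hxa : |x| ≤ |x| ^ p / ε ^ (p - 1) := by
      rw [le_div_iff₀ hε1, ← hxp]
      exact mul_le_mul_of_nonneg_left h1 hx.le
    have hδ1 : δ ≤ δ * (|x| ^ p / ε ^ p) := by
      have hone : (1:ℝ) ≤ |x| ^ p / ε ^ p := (one_le_div hεp).mpr h2
      nlinarith
    have expand : |x| ^ p * (1 / ε ^ (p - 1) + δ / ε ^ p)
        = |x| ^ p / ε ^ (p - 1) + δ * (|x| ^ p / ε ^ p) := by ring
    rw [expand]
    linarith
  · have : (0:ℝ) ≤ |x| ^ p * (1 / ε ^ (p - 1) + δ / ε ^ p) := by positivity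
    linarith

lemma sum_abs_rpow_le {p η : ℝ} (hp : 1 ≤ p) (hη : 0 < η) {m : ℕ} (r : Fin m → ℝ)
    (hr : lpNorm p r ≤ η * (m : ℝ) ^ (1 / p)) :
    ∑ i, |r i| ^ p ≤ η ^ p * m := by
  have hp0 : (0:ℝ) < p := lt_of_lt_of_le one_pos hp
  set S := ∑ i, |r i| ^ p with hS
  have hS0 : 0 ≤ S := Finset.sum_nonneg fun i _ => Real.rpow_nonneg (abs_nonneg _) p
  have hmono := Real.rpow_le_rpow (Real.rpow_nonneg hS0 _) hr hp0.le
  rw [← Real.rpow_mul hS0, one_div_mul_cancel hp0.ne', Real.rpow_one] at hmono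
  rwa [Real.mul_rpow hη.le (Real.rpow_nonneg (Nat.cast_nonneg m) _),
    ← Real.rpow_mul (Nat.cast_nonneg m), one_div_mul_cancel hp0.ne', Real.rpow_one] at hmono

lemma sum_eBd_le {p η P δ : ℝ} (hp : 1 ≤ p) (hη : 0 < η) (hP : 1 ≤ P) (hδ : 0 < δ)
    {m : ℕ} (r : Fin m → ℝ) (hr : lpNorm p r ≤ η * (m : ℝ) ^ (1 / p)) :
    ∑ i, eBd (η * P ^ (1 / p)) δ (r i) ≤ m * (η + δ / P) := by
  have hp0 : (0:ℝ) < p := lt_of_lt_of_le one_pos hp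
  have hP0 : (0:ℝ) < P := lt_of_lt_of_le one_pos hP
  set ε := η * P ^ (1 / p) with hεdef
  have hPp : (0:ℝ) < P ^ (1 / p) := Real.rpow_pos_of_pos hP0 _
  have hε : 0 < ε := by positivity
  have hP1 : (1:ℝ) ≤ P ^ (1 / p) := by
    have := Real.rpow_le_rpow_of_exponent_le hP (by positivity : (0:ℝ) ≤ 1 / p)
    rwa [Real.rpow_zero] at this
  have hηε : η ≤ ε := by nlinarith
  set C := 1 / ε ^ (p - 1) + δ / ε ^ p with hC
  have hεp1 : (0:ℝ) < ε ^ (p - 1) := Real.rpow_pos_of_pos hε _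
  have hεpp : (0:ℝ) < ε ^ p := Real.rpow_pos_of_pos hε _
  have hC0 : 0 ≤ C := by positivity
  have hsum := sum_abs_rpow_le hp hη r hr
  have step1 : ∑ i, eBd ε δ (r i) ≤ ∑ i, |r i| ^ p * C :=
    Finset.sum_le_sum fun i _ => eBd_le hp hε hδ.le (r i)
  have step2 : ∑ i, |r i| ^ p * C = (∑ i, |r i| ^ p) * C := (Finset.sum_mul _ _ _).symm
  have step3 : (∑ i, |r i| ^ p) * C ≤ (η ^ p * m) * C :=
    mul_le_mul_of_nonneg_right hsum hC0
  have hη1 : η ^ (p - 1) ≤ ε ^ (p - 1) := Real.rpow_le_rpow hη.le hηε (by linarith)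
  have hηp1 : (0:ℝ) < η ^ (p - 1) := Real.rpow_pos_of_pos hη _
  have hηmul : η * η ^ (p - 1) = η ^ p := by
    have h := (Real.rpow_add hη 1 (p - 1)).symm
    rw [Real.rpow_one] at h
    rw [h, show (1:ℝ) + (p - 1) = p by ring]
  have t1 : η ^ p * (1 / ε ^ (p - 1)) ≤ η := by
    rw [mul_one_div, div_le_iff₀ hεp1, ← hηmul]
    exact mul_le_mul_of_nonneg_left hη1 hη.le
  have hεP : ε ^ p = η ^ p * P := by
    rw [hεdef, Real.mul_rpow hη.le hPp.le, ← Real.rpow_mul hP0.le,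
      one_div_mul_cancel hp0.ne', Real.rpow_one]
  have hηp : (0:ℝ) < η ^ p := Real.rpow_pos_of_pos hη _
  have t2 : η ^ p * (δ / ε ^ p) = δ / P := by
    rw [hεP]
    field_simp
  have hfin : (η ^ p * (m:ℝ)) * C ≤ m * (η + δ / P) := by
    have : (η ^ p * (m:ℝ)) * C = (m:ℝ) * (η ^ p * (1 / ε ^ (p - 1)) + η ^ p * (δ / ε ^ p)) := by
      rw [hC]; ring
    rw [this, t2]
    have hm0 : (0:ℝ) ≤ m := Nat.cast_nonneg m
    nlinarith
  calc ∑ i, eBd ε δ (r i) ≤ ∑ i, |r i| ^ p * C := step1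
    _ = (∑ i, |r i| ^ p) * C := step2
    _ ≤ (η ^ p * m) * C := step3
    _ ≤ m * (η + δ / P) := hfin

lemma Dkey {δ ε : ℝ} (hδ : 0 < δ) (hε : 0 ≤ ε) {m : ℕ} (a a' r r' : Fin m → ℝ)
    (t E : ℝ) (hE : 0 ≤ E)
    (h1 : ∑ i, eBd ε δ (r i) ≤ m * E) (h2 : ∑ i, eBd ε δ (r' i) ≤ m * E) :
    Dsoft δ t (a + r) (a' + r') ≤ Dsoft δ (t - ε) a a' + 2 * E := by
  unfold Dsoft
  rcases Nat.eq_zero_or_pos m with hm | hm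
  · subst hm
    simp only [Finset.univ_eq_empty, Finset.sum_empty, mul_zero, Nat.cast_zero]
    linarith
  · have hm' : (0:ℝ) < m := by exact_mod_cast hm
    have hsum : ∑ i, dsoft δ t ((a + r) i) ((a' + r') i)
        ≤ ∑ i, dsoft δ (t - ε) (a i) (a' i)
          + (∑ i, eBd ε δ (r i) + ∑ i, eBd ε δ (r' i)) := by
      have hpt : ∀ i ∈ Finset.univ, dsoft δ t ((a + r) i) ((a' + r') i)
          ≤ dsoft δ (t - ε) (a i) (a' i) + eBd ε δ (r i) + eBd ε δ (r' i) := fun i _ => by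
        simpa [Pi.add_apply] using key hδ hε t (a i) (a' i) (r i) (r' i)
      calc ∑ i, dsoft δ t ((a + r) i) ((a' + r') i)
          ≤ ∑ i, (dsoft δ (t - ε) (a i) (a' i) + eBd ε δ (r i) + eBd ε δ (r' i)) :=
            Finset.sum_le_sum hpt
        _ = ∑ i, dsoft δ (t - ε) (a i) (a' i)
            + (∑ i, eBd ε δ (r i) + ∑ i, eBd ε δ (r' i)) := by
          rw [Finset.sum_add_distrib, Finset.sum_add_distrib]
          ring
    have hmul := mul_le_mul_of_nonneg_left hsum (by positivity : (0:ℝ) ≤ 1 / m)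
    have htail : (1 / (m:ℝ)) * (∑ i, eBd ε δ (r i) + ∑ i, eBd ε δ (r' i)) ≤ 2 * E := by
      have hle : ∑ i, eBd ε δ (r i) + ∑ i, eBd ε δ (r' i) ≤ (m:ℝ) * E + (m:ℝ) * E :=
        add_le_add h1 h2
      have hle2 := mul_le_mul_of_nonneg_left hle (by positivity : (0:ℝ) ≤ 1 / m)
      calc (1 / (m:ℝ)) * (∑ i, eBd ε δ (r i) + ∑ i, eBd ε δ (r' i))
          ≤ (1 / (m:ℝ)) * ((m:ℝ) * E + (m:ℝ) * E) := hle2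
        _ = 2 * E := by field_simp; ring
    calc (1 / (m:ℝ)) * ∑ i, dsoft δ t ((a + r) i) ((a' + r') i)
        ≤ (1 / (m:ℝ)) * (∑ i, dsoft δ (t - ε) (a i) (a' i)
            + (∑ i, eBd ε δ (r i) + ∑ i, eBd ε δ (r' i))) := hmul
      _ = (1 / (m:ℝ)) * ∑ i, dsoft δ (t - ε) (a i) (a' i)
          + (1 / (m:ℝ)) * (∑ i, eBd ε δ (r i) + ∑ i, eBd ε δ (r' i)) := by ring
      _ ≤ (1 / (m:ℝ)) * ∑ i, dsoft δ (t - ε) (a i) (a' i) + 2 * E := by linarith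

end Stmt7aux

open Stmt7aux in
/-- Continuity of `D^t` with respect to `ℓ_p`-perturbations. -/
theorem stmt7 (δ p η P : ℝ) (hδ : 0 < δ) (hp : 1 ≤ p) (hη : 0 < η) (hP : 1 ≤ P)
    (m : ℕ) (a a' r r' : Fin m → ℝ)
    (hr : lpNorm p r ≤ η * (m : ℝ) ^ (1 / p)) (hr' : lpNorm p r' ≤ η * (m : ℝ) ^ (1 / p))
    (t : ℝ) :
    Dsoft δ (t + η * P ^ (1 / p)) a a' - 8 * (δ / P + η) ≤ Dsoft δ t (a + r) (a' + r') ∧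
    Dsoft δ t (a + r) (a' + r') ≤ Dsoft δ (t - η * P ^ (1 / p)) a a' + 8 * (δ / P + η) := by
  have hP0 : (0:ℝ) < P := lt_of_lt_of_le one_pos hP
  set ε := η * P ^ (1 / p) with hεdef
  have hε : 0 < ε := by
    have : (0:ℝ) < P ^ (1 / p) := Real.rpow_pos_of_pos hP0 _
    positivity
  have hb1 := sum_eBd_le hp hη hP hδ r hr
  have hb2 := sum_eBd_le hp hη hP hδ r' hr'
  have hE : (0:ℝ) ≤ η + δ / P := by positivity
  have hδP : (0:ℝ) < δ / P := by positivity
  constructor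
  · have hkey := Dkey hδ hε.le (a + r) (a' + r') (-r) (-r') (t + ε) (η + δ / P) hE
      (by simpa only [Pi.neg_apply, eBd_neg] using hb1)
      (by simpa only [Pi.neg_apply, eBd_neg] using hb2)
    have e1 : a + r + -r = a := by abel
    have e2 : a' + r' + -r' = a' := by abel
    have e3 : t + ε - ε = t := by ring
    rw [e1, e2, e3] at hkey
    linarith
  · have hkey := Dkey hδ hε.le a a' r r' t (η + δ / P) hE hb1 hb2
    linarith
end

section
/- Let δ > 0, ξ ~ U^m([0, δ]), a, a' ∈ ℝ^m, t ∈ ℝ, and D^t(u, v) = (1/m) Σ_i d^t(u_i, v_i) with d^t the softened quantized distance of resolution δ. Then there exist universal constants C, c > 0 such that for all ε > 0: P[ |D^t(a + ξ, a' + ξ) - (1/m)‖a - a'‖₁| > 4|t| + ε(δ + |t|) ] ≤ C exp(-c ε² m). -/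
open MeasureTheory ENNReal ProbabilityTheory

/-- i.i.d. uniform dither on `[0, δ]^m`. -/
noncomputable def unifPi (δ : ℝ) (m : ℕ) : Measure (Fin m → ℝ) :=
  Measure.pi fun _ => unif δ

/-! ### Auxiliary definitions and lemmas -/

noncomputable def cntF (δ c d : ℝ) : Finset ℤ := Finset.Ioo ⌊c / δ⌋ ⌈d / δ⌉

lemma mem_cntF {δ c d : ℝ} (hδ : 0 < δ) (k : ℤ) :
    k ∈ cntF δ c d ↔ c < k * δ ∧ k * δ < d := by
  simp only [cntF, Finset.mem_Ioo, Int.floor_lt, Int.lt_ceil]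
  rw [div_lt_iff₀ hδ, lt_div_iff₀ hδ]

lemma dsoft_comm (δ t u v : ℝ) : dsoft δ t u v = dsoft δ t v u := by
  classical
  unfold dsoft
  congr 1
  apply tsum_congr
  intro k
  have h : ((u - k * δ, v - k * δ) ∈ Ssoft t) ↔ ((v - k * δ, u - k * δ) ∈ Ssoft t) := by
    simp only [Ssoft, Set.mem_union, Set.mem_setOf_eq]
    tauto
  simp only [Set.indicator_apply, h]

lemma dsoft_eq_card {δ t : ℝ} (hδ : 0 < δ) {u u' : ℝ} (h : u ≤ u') :
    dsoft δ t u u' = δ * (cntF δ (u + t) (u' - t)).card := by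
  classical
  unfold dsoft
  congr 1
  have hmem : ∀ k : ℤ, ((u - k * δ, u' - k * δ) ∈ Ssoft t) ↔ k ∈ cntF δ (u + t) (u' - t) := by
    intro k
    rw [mem_cntF hδ]
    simp only [Ssoft, Set.mem_union, Set.mem_setOf_eq]
    constructor
    · rintro (⟨h1, h2⟩ | ⟨h1, h2⟩)
      · constructor <;> linarith
      · constructor <;> linarith
    · rintro ⟨h1, h2⟩
      exact Or.inl ⟨by linarith, by linarith⟩
  have heq : ∀ k : ℤ, Set.indicator (Ssoft t) (fun _ => (1 : ℝ)) (u - k * δ, u' - k * δ)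
      = if k ∈ cntF δ (u + t) (u' - t) then 1 else 0 := by
    intro k
    rw [Set.indicator_apply]
    simp only [hmem k]
  rw [tsum_congr heq, tsum_eq_sum (s := cntF δ (u + t) (u' - t)) (by intro k hk; simp [hk])]
  simp

lemma card_bounds {δ : ℝ} (hδ : 0 < δ) (c d : ℝ) :
    |δ * ((cntF δ c d).card : ℝ) - max (d - c) 0| ≤ δ := by
  have hx1 : (c/δ) - 1 < ⌊c/δ⌋ := Int.sub_one_lt_floor _
  have hx2 : (⌊c/δ⌋:ℝ) ≤ c/δ := Int.floor_le _
  have hy1 : (⌈d/δ⌉:ℝ) < d/δ + 1 := Int.ceil_lt_add_one _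
  have hy2 : d/δ ≤ (⌈d/δ⌉:ℝ) := Int.le_ceil _
  have hc' : c/δ * δ = c := div_mul_cancel₀ _ hδ.ne'
  have hd' : d/δ * δ = d := div_mul_cancel₀ _ hδ.ne'
  rw [cntF, Int.card_Ioo]
  rcases le_or_gt (⌈d/δ⌉ - ⌊c/δ⌋ - 1) 0 with hc | hc
  · rw [Int.toNat_of_nonpos hc]
    have h2 : ((⌈d/δ⌉:ℝ) - ⌊c/δ⌋ - 1) ≤ 0 := by
      have : ((⌈d/δ⌉ - ⌊c/δ⌋ - 1 : ℤ) : ℝ) ≤ 0 := by exact_mod_cast hc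
      push_cast at this; linarith
    have hdc : d - c ≤ δ := by nlinarith
    simp only [Nat.cast_zero, mul_zero, zero_sub, abs_neg]
    rw [abs_of_nonneg (le_max_right _ _)]
    rcases max_cases (d - c) 0 with ⟨h, _⟩ | ⟨h, _⟩ <;> rw [h] <;> linarith
  · have h3 : ((⌈d/δ⌉ - ⌊c/δ⌋ - 1).toNat : ℝ) = ((⌈d/δ⌉:ℝ) - ⌊c/δ⌋ - 1) := by
      have := congrArg (fun z : ℤ => (z:ℝ)) (Int.toNat_of_nonneg hc.le)
      push_cast at this ⊢
      linarith
    rw [h3]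
    have h2 : (0:ℝ) < (⌈d/δ⌉:ℝ) - ⌊c/δ⌋ - 1 := by
      have : (0:ℝ) < ((⌈d/δ⌉ - ⌊c/δ⌋ - 1 : ℤ) : ℝ) := by exact_mod_cast hc
      push_cast at this; linarith
    have e1 : δ * ((⌈d/δ⌉:ℝ) - ⌊c/δ⌋ - 1) ≤ d - c + δ := by nlinarith
    have e2 : d - c - δ ≤ δ * ((⌈d/δ⌉:ℝ) - ⌊c/δ⌋ - 1) := by nlinarith
    rcases max_cases (d - c) 0 with ⟨h, h'⟩ | ⟨h, h'⟩ <;> rw [h] <;> rw [abs_le] <;>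
      constructor <;> nlinarith

lemma measurable_card (δ c d : ℝ) :
    Measurable fun x : ℝ => ((cntF δ (c + x) (d + x)).card : ℝ) := by
  have h1 : Measurable fun x : ℝ => ⌊(c + x) / δ⌋ :=
    Int.measurable_floor.comp ((measurable_const.add measurable_id).div_const δ)
  have h2 : Measurable fun x : ℝ => ⌈(d + x) / δ⌉ :=
    Int.measurable_ceil.comp ((measurable_const.add measurable_id).div_const δ)
  have heq : (fun x : ℝ => ((cntF δ (c + x) (d + x)).card : ℝ))
      = (fun p : ℤ × ℤ => ((Finset.Ioo p.1 p.2).card : ℝ))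
        ∘ (fun x => (⌊(c + x) / δ⌋, ⌈(d + x) / δ⌉)) := rfl
  rw [heq]
  exact (measurable_of_countable _).comp (h1.prodMk h2)

lemma measurable_card' (δ c d : ℝ) :
    Measurable fun x : ℝ => ((cntF δ (c + x) (d + x)).card : ℝ≥0∞) := by
  have h1 : Measurable fun x : ℝ => ⌊(c + x) / δ⌋ :=
    Int.measurable_floor.comp ((measurable_const.add measurable_id).div_const δ)
  have h2 : Measurable fun x : ℝ => ⌈(d + x) / δ⌉ :=
    Int.measurable_ceil.comp ((measurable_const.add measurable_id).div_const δ)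
  have heq : (fun x : ℝ => ((cntF δ (c + x) (d + x)).card : ℝ≥0∞))
      = (fun p : ℤ × ℤ => ((Finset.Ioo p.1 p.2).card : ℝ≥0∞))
        ∘ (fun x => (⌊(c + x) / δ⌋, ⌈(d + x) / δ⌉)) := rfl
  rw [heq]
  exact (measurable_of_countable _).comp (h1.prodMk h2)

lemma lintegral_card {δ : ℝ} (hδ : 0 < δ) (c d : ℝ) :
    (∫⁻ x in Set.Icc 0 δ, ((cntF δ (c + x) (d + x)).card : ℝ≥0∞)) = ENNReal.ofReal (d - c) := by
  classical
  have hrep : ∀ x : ℝ, ((cntF δ (c + x) (d + x)).card : ℝ≥0∞)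
      = ∑' k : ℤ, (Set.Ioo (k * δ - d) (k * δ - c)).indicator (1 : ℝ → ℝ≥0∞) x := by
    intro x
    have hiff : ∀ k : ℤ, x ∈ Set.Ioo (k * δ - d) (k * δ - c) ↔ k ∈ cntF δ (c + x) (d + x) := by
      intro k
      rw [mem_cntF hδ, Set.mem_Ioo]
      constructor <;> rintro ⟨h1, h2⟩ <;> constructor <;> linarith
    rw [tsum_eq_sum (s := cntF δ (c + x) (d + x))
      (fun k hk => Set.indicator_of_notMem (fun h => hk ((hiff k).mp h)) _)]
    rw [Finset.sum_congr rfl (fun k hk => Set.indicator_of_mem ((hiff k).mpr hk) _)]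
    simp
  simp_rw [hrep]
  rw [lintegral_tsum (fun k => (measurable_one.indicator measurableSet_Ioo).aemeasurable)]
  have hterm : ∀ k : ℤ, (∫⁻ x in Set.Icc 0 δ,
      (Set.Ioo ((k:ℝ) * δ - d) (k * δ - c)).indicator (1 : ℝ → ℝ≥0∞) x)
      = volume (Set.Ioo (-d) (-c) ∩ Set.Ico (-(k:ℝ) * δ) (δ - k * δ)) := by
    intro k
    rw [lintegral_indicator measurableSet_Ioo]
    simp only [Pi.one_apply, lintegral_one, Measure.restrict_apply MeasurableSet.univ,
      Set.univ_inter]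
    rw [Measure.restrict_apply measurableSet_Ioo]
    have hIccIco : volume (Set.Ioo ((k:ℝ) * δ - d) (k * δ - c) ∩ Set.Icc 0 δ)
        = volume (Set.Ioo ((k:ℝ) * δ - d) (k * δ - c) ∩ Set.Ico 0 δ) := by
      apply le_antisymm
      · calc volume (Set.Ioo ((k:ℝ) * δ - d) (k * δ - c) ∩ Set.Icc 0 δ)
            ≤ volume ((Set.Ioo ((k:ℝ) * δ - d) (k * δ - c) ∩ Set.Ico 0 δ) ∪ {δ}) := by
              apply measure_mono; rintro x ⟨hx1, hx2, hx3⟩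
              rcases eq_or_lt_of_le hx3 with rfl | h
              · exact Or.inr rfl
              · exact Or.inl ⟨hx1, hx2, h⟩
          _ ≤ volume (Set.Ioo ((k:ℝ) * δ - d) (k * δ - c) ∩ Set.Ico 0 δ) + volume {δ} :=
              measure_union_le _ _
          _ = volume (Set.Ioo ((k:ℝ) * δ - d) (k * δ - c) ∩ Set.Ico 0 δ) := by
              rw [Real.volume_singleton, add_zero]
      · exact measure_mono (Set.inter_subset_inter_right _ Set.Ico_subset_Icc_self)
    rw [hIccIco]
    have hpre : Set.Ioo (-d) (-c) ∩ Set.Ico (-(k:ℝ) * δ) (δ - k * δ)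
        = (fun x => x + (k:ℝ) * δ) ⁻¹' (Set.Ioo ((k:ℝ) * δ - d) (k * δ - c) ∩ Set.Ico 0 δ) := by
      ext x
      simp only [Set.mem_inter_iff, Set.mem_Ioo, Set.mem_Ico, Set.mem_preimage]
      constructor <;> rintro ⟨⟨h1, h2⟩, h3, h4⟩ <;>
        exact ⟨⟨by linarith, by linarith⟩, by linarith, by linarith⟩
    rw [hpre, measure_preimage_add_right]
  simp_rw [hterm]
  rw [← (Equiv.neg ℤ).tsum_eq]
  have hterm2 : ∀ k : ℤ, volume (Set.Ioo (-d) (-c)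
        ∩ Set.Ico (-((Equiv.neg ℤ) k : ℤ) * δ) (δ - ((Equiv.neg ℤ) k : ℤ) * δ))
      = volume (Set.Ioo (-d) (-c) ∩ Set.Ico ((k:ℝ) * δ) ((k:ℝ) * δ + δ)) := by
    intro k
    congr 2 <;> push_cast [Equiv.neg_apply] <;> ring_nf
  simp_rw [hterm2]
  rw [← measure_iUnion]
  · rw [← Set.inter_iUnion]
    have hcover : ⋃ k : ℤ, Set.Ico ((k:ℝ) * δ) ((k:ℝ) * δ + δ) = Set.univ := by
      rw [Set.eq_univ_iff_forall]
      intro x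
      refine Set.mem_iUnion.mpr ⟨⌊x / δ⌋, ?_, ?_⟩
      · have h0 : (⌊x / δ⌋ : ℝ) * δ ≤ x / δ * δ :=
          mul_le_mul_of_nonneg_right (Int.floor_le _) hδ.le
        rw [div_mul_cancel₀ _ hδ.ne'] at h0
        exact h0
      · have h1 : x / δ < ⌊x / δ⌋ + 1 := Int.lt_floor_add_one _
        have := mul_lt_mul_of_pos_right h1 hδ
        rw [div_mul_cancel₀ _ hδ.ne'] at this
        linarith [this]
    rw [hcover, Set.inter_univ, Real.volume_Ioo]
    ring_nf
  · intro i j hij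
    simp only [Function.onFun]
    apply Set.disjoint_left.mpr
    rintro x ⟨_, h1, h2⟩ ⟨_, h3, h4⟩
    rcases lt_or_gt_of_ne hij with h | h
    · have : ((i:ℝ) + 1) ≤ j := by exact_mod_cast h
      nlinarith
    · have : ((j:ℝ) + 1) ≤ i := by exact_mod_cast h
      nlinarith
  · exact fun k => (measurableSet_Ioo.inter measurableSet_Ico)

lemma prob_unif {δ : ℝ} (hδ : 0 < δ) : IsProbabilityMeasure (unif δ) := by
  constructor
  rw [unif, Measure.smul_apply, Measure.restrict_apply MeasurableSet.univ, Set.univ_inter,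
    Real.volume_Icc, sub_zero, smul_eq_mul,
    ENNReal.inv_mul_cancel (by simp [hδ]) ENNReal.ofReal_ne_top]

lemma integral_card {δ : ℝ} (hδ : 0 < δ) (c d : ℝ) :
    ∫ x, δ * ((cntF δ (c + x) (d + x)).card : ℝ) ∂(unif δ) = max (d - c) 0 := by
  have hmeas : Measurable fun x : ℝ => δ * ((cntF δ (c + x) (d + x)).card : ℝ) :=
    (measurable_card δ c d).const_mul δ
  rw [integral_eq_lintegral_of_nonneg_ae
    (Filter.Eventually.of_forall fun x => by positivity) hmeas.aestronglyMeasurable]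
  have hof : ∀ x : ℝ, ENNReal.ofReal (δ * ((cntF δ (c + x) (d + x)).card : ℝ))
      = ENNReal.ofReal δ * ((cntF δ (c + x) (d + x)).card : ℝ≥0∞) := by
    intro x
    rw [ENNReal.ofReal_mul hδ.le, ENNReal.ofReal_natCast]
  simp_rw [hof]
  rw [unif, lintegral_smul_measure,
    lintegral_const_mul _ (measurable_card' δ c d), lintegral_card hδ c d,
    smul_eq_mul, ← mul_assoc, ENNReal.inv_mul_cancel (by simp [hδ]) ENNReal.ofReal_ne_top, one_mul]
  rcases le_or_gt (d - c) 0 with h | h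
  · rw [ENNReal.ofReal_of_nonpos h, max_eq_right h]; simp
  · rw [ENNReal.toReal_ofReal h.le, max_eq_left h.le]

lemma exp_quad_bound {y : ℝ} (hy : |y| ≤ 1) : Real.exp y ≤ 1 + y + (3/4) * y^2 := by
  have h := Real.exp_bound hy (n := 2) (by norm_num)
  have h2 : ∑ i ∈ Finset.range 2, y ^ i / (Nat.factorial i : ℝ) = 1 + y := by
    simp [Finset.sum_range_succ]
  rw [h2] at h
  norm_num [Nat.factorial, sq_abs] at h
  have := abs_le.mp h
  linarith [this.2]

lemma integrable_of_bounded' {α : Type*} [MeasurableSpace α] {μ : Measure α}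
    [IsProbabilityMeasure μ] {g : α → ℝ}
    (hg : Measurable g) {M : ℝ} (hb : ∀ x, |g x| ≤ M) : Integrable g μ := by
  refine ⟨hg.aestronglyMeasurable, ?_⟩
  apply HasFiniteIntegral.mono' (g := fun _ => M) (hasFiniteIntegral_const M)
  exact Filter.Eventually.of_forall fun x => by simpa using hb x

lemma mgf_le_of_bounded {μ : Measure ℝ} [IsProbabilityMeasure μ] {g : ℝ → ℝ}
    (hg : Measurable g) {M s : ℝ} (hb : ∀ x, |g x| ≤ M) (h0 : (∫ x, g x ∂μ) = 0)
    (hs : 0 ≤ s) (hsM : s * M ≤ 1) :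
    (∫ x, Real.exp (s * g x) ∂μ) ≤ Real.exp ((3/4) * s^2 * M^2) := by
  have hM : 0 ≤ M := le_trans (abs_nonneg _) (hb 0)
  have hbd : ∀ x, |s * g x| ≤ 1 := by
    intro x
    rw [abs_mul, abs_of_nonneg hs]
    calc s * |g x| ≤ s * M := by gcongr; exact hb x
      _ ≤ 1 := hsM
  have hpt : ∀ x, Real.exp (s * g x) ≤ 1 + s * g x + (3/4) * (s * g x)^2 := fun x =>
    exp_quad_bound (hbd x)
  have hint_g : Integrable g μ := integrable_of_bounded' hg hb
  have hint_gsq : Integrable (fun x => (g x)^2) μ := by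
    apply integrable_of_bounded' (by fun_prop)
    intro x
    rw [abs_of_nonneg (sq_nonneg _), ← sq_abs]
    exact pow_le_pow_left₀ (abs_nonneg _) (hb x) 2
  have hint_g2 : Integrable (fun x => (3/4) * s^2 * (g x)^2) μ := hint_gsq.const_mul _
  have hint_exp : Integrable (fun x => Real.exp (s * g x)) μ := by
    apply integrable_of_bounded' (by fun_prop)
    intro x
    rw [abs_of_nonneg (Real.exp_pos _).le]
    calc Real.exp (s * g x) ≤ Real.exp 1 := by
          apply Real.exp_le_exp.mpr; exact le_trans (le_abs_self _) (hbd x)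
      _ ≤ 3 := by
          have := Real.exp_one_lt_d9
          linarith
  calc (∫ x, Real.exp (s * g x) ∂μ)
      ≤ ∫ x, (1 + s * g x + (3/4) * s^2 * (g x)^2) ∂μ := by
        apply integral_mono hint_exp _ (fun x => le_trans (hpt x) (le_of_eq (by ring)))
        exact ((integrable_const 1).add (hint_g.const_mul s)).add hint_g2
    _ = 1 + s * (∫ x, g x ∂μ) + (3/4) * s^2 * (∫ x, (g x)^2 ∂μ) := by
        simp_rw [add_assoc]
        have hsum : Integrable (fun x => s * g x + (3/4) * s^2 * (g x)^2) μ :=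
          (hint_g.const_mul s).add hint_g2
        rw [integral_add (integrable_const 1) hsum,
          integral_add (hint_g.const_mul s) hint_g2,
          integral_const, integral_const_mul, integral_const_mul]
        simp [measure_univ, add_assoc]
    _ ≤ 1 + (3/4) * s^2 * M^2 := by
        rw [h0, mul_zero, add_zero]
        have hsq : (∫ x, (g x)^2 ∂μ) ≤ M^2 := by
          calc (∫ x, (g x)^2 ∂μ) ≤ ∫ _x, M^2 ∂μ := by
                apply integral_mono hint_gsq (integrable_const _)
                intro x
                have h5 := pow_le_pow_left₀ (abs_nonneg _) (hb x) 2
                rw [sq_abs] at h5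
                exact h5
            _ = M^2 := by simp [measure_univ]
        nlinarith [sq_nonneg s]
    _ ≤ Real.exp ((3/4) * s^2 * M^2) := by
        linarith [Real.add_one_le_exp ((3/4) * s^2 * M^2)]

lemma chernoff_side {δ : ℝ} (hδ : 0 < δ) (m : ℕ) (W : Fin m → ℝ → ℝ)
    (hW : ∀ i, Measurable (W i)) {M : ℝ}
    (hb : ∀ i x, |W i x| ≤ M) (h0 : ∀ i, (∫ x, W i x ∂(unif δ)) = 0)
    {s : ℝ} (hs : 0 ≤ s) (hsM : s * M ≤ 1) (r : ℝ) :
    unifPi δ m {ξ | r ≤ ∑ i, W i (ξ i)}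
      ≤ ENNReal.ofReal (Real.exp (-s * r + m * ((3/4) * s^2 * M^2))) := by
  haveI : IsProbabilityMeasure (unif δ) := prob_unif hδ
  haveI : IsProbabilityMeasure (unifPi δ m) := by
    unfold unifPi; infer_instance
  set X : (Fin m → ℝ) → ℝ := fun ξ => ∑ i, W i (ξ i) with hX
  have hXm : Measurable X := Finset.measurable_sum _ fun i _ =>
    (hW i).comp (measurable_pi_apply i)
  have hint : Integrable (fun ω => Real.exp (s * X ω)) (unifPi δ m) := by
    apply integrable_of_bounded' (by fun_prop)
    intro ξ
    rw [abs_of_nonneg (Real.exp_pos _).le]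
    apply Real.exp_le_exp.mpr
    calc s * X ξ ≤ s * (m * M) := by
          apply mul_le_mul_of_nonneg_left _ hs
          calc X ξ ≤ ∑ _i : Fin m, M := Finset.sum_le_sum fun i _ =>
                le_trans (le_abs_self _) (hb i _)
            _ = m * M := by simp [mul_comm]
      _ ≤ |s * (m * M)| := le_abs_self _
  have key := measure_ge_le_exp_mul_mgf (X := X) (μ := unifPi δ m) (t := s) r hs hint
  have hmgf : mgf X (unifPi δ m) s ≤ Real.exp (m * ((3/4) * s^2 * M^2)) := by
    have hprod : mgf X (unifPi δ m) s = ∏ i, ∫ x, Real.exp (s * W i x) ∂(unif δ) := by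
      rw [mgf]
      have : (fun ω => Real.exp (s * X ω)) = fun ω => ∏ i, Real.exp (s * W i (ω i)) := by
        funext ω
        rw [hX, ← Real.exp_sum, Finset.mul_sum]
      rw [this]
      letI : MeasureSpace ℝ := ⟨unif δ⟩
      exact integral_fintype_prod_eq_prod (ι := Fin m) fun i x => Real.exp (s * W i x)
    rw [hprod]
    calc ∏ i, ∫ x, Real.exp (s * W i x) ∂(unif δ)
        ≤ ∏ _i : Fin m, Real.exp ((3/4) * s^2 * M^2) := by
          apply Finset.prod_le_prod (fun i _ => integral_nonneg fun x => (Real.exp_pos _).le)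
          exact fun i _ => mgf_le_of_bounded (hW i) (hb i) (h0 i) hs hsM
      _ = Real.exp (m * ((3/4) * s^2 * M^2)) := by
          rw [Finset.prod_const, ← Real.exp_nat_mul]
          simp
  have hfin : unifPi δ m {ξ | r ≤ X ξ} ≠ ⊤ := measure_ne_top _ _
  calc unifPi δ m {ξ | r ≤ X ξ}
      = ENNReal.ofReal ((unifPi δ m {ξ | r ≤ X ξ}).toReal) := (ENNReal.ofReal_toReal hfin).symm
    _ ≤ ENNReal.ofReal (Real.exp (-s * r) * mgf X (unifPi δ m) s) := ENNReal.ofReal_le_ofReal key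
    _ ≤ ENNReal.ofReal (Real.exp (-s * r + m * ((3/4) * s^2 * M^2))) := by
        apply ENNReal.ofReal_le_ofReal
        rw [Real.exp_add]
        exact mul_le_mul_of_nonneg_left hmgf (Real.exp_pos _).le

/-- Concentration of the dithered softened distance around the mean `ℓ₁`-distance. -/
theorem stmt14 :
    ∃ C > (0 : ℝ), ∃ c > (0 : ℝ),
      ∀ (m : ℕ) (δ : ℝ), 0 < δ → ∀ (t : ℝ) (a a' : Fin m → ℝ) (ε : ℝ), 0 < ε →
        unifPi δ m {ξ | 4 * |t| + ε * (δ + |t|) <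
            abs (Dsoft δ t (a + ξ) (a' + ξ) - (1 / (m : ℝ)) * ∑ i, |a i - a' i|)}
          ≤ ENNReal.ofReal (C * Real.exp (-c * ε ^ 2 * m)) := by
  classical
  refine ⟨2, by norm_num, 1/48, by norm_num, ?_⟩
  intro m δ hδ t a a' ε hε
  haveI : IsProbabilityMeasure (unif δ) := prob_unif hδ
  have habt : (0:ℝ) ≤ |t| := abs_nonneg t
  set κ : ℝ := δ + |t| with hκdef
  have hκpos : 0 < κ := by rw [hκdef]; linarith
  set L : Fin m → ℝ := fun i => |a i - a' i| with hLdef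
  set cc : Fin m → ℝ := fun i => min (a i) (a' i) + t with hccdef
  set dd : Fin m → ℝ := fun i => max (a i) (a' i) - t with hdddef
  have hLnn : ∀ i, 0 ≤ L i := fun i => abs_nonneg _
  have hdc : ∀ i, dd i - cc i = L i - 2*t := by
    intro i
    simp only [hLdef, hccdef, hdddef]
    rcases le_total (a i) (a' i) with h | h
    · rw [min_eq_left h, max_eq_right h, abs_sub_comm, abs_of_nonneg (by linarith : (0:ℝ) ≤ a' i - a i)]
      ring
    · rw [min_eq_right h, max_eq_left h, abs_of_nonneg (by linarith : (0:ℝ) ≤ a i - a' i)]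
      ring
  have hdsoft : ∀ i x, dsoft δ t (a i + x) (a' i + x)
      = δ * ((cntF δ (cc i + x) (dd i + x)).card : ℝ) := by
    intro i x
    have h1 : dsoft δ t (a i + x) (a' i + x)
        = dsoft δ t (min (a i) (a' i) + x) (max (a i) (a' i) + x) := by
      rcases le_total (a i) (a' i) with h | h
      · rw [min_eq_left h, max_eq_right h]
      · rw [min_eq_right h, max_eq_left h]
        exact dsoft_comm δ t _ _
    rw [h1, dsoft_eq_card hδ (show min (a i) (a' i) + x ≤ max (a i) (a' i) + x from by
        linarith [min_le_left (a i) (a' i), le_max_left (a i) (a' i)]),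
      show min (a i) (a' i) + x + t = cc i + x from by simp only [hccdef]; ring,
      show max (a i) (a' i) + x - t = dd i + x from by simp only [hdddef]; ring]
  set B : ℝ := δ + 2 * |t| with hBdef
  have hBpos : 0 < B := by rw [hBdef]; linarith
  set Z : Fin m → ℝ → ℝ :=
    fun i x => δ * ((cntF δ (cc i + x) (dd i + x)).card : ℝ) - L i with hZdef
  have hmax3 : ∀ i, |max (L i - 2*t) 0 - L i| ≤ 2*|t| := by
    intro i
    rcases max_cases (L i - 2*t) 0 with ⟨h, h'⟩ | ⟨h, h'⟩ <;> rw [h]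
    · rw [show L i - 2*t - L i = -(2*t) by ring, abs_neg, abs_mul]
      simp [abs_two]
    · rw [zero_sub, abs_neg, abs_of_nonneg (hLnn i)]
      linarith [le_abs_self t]
  have hZb : ∀ i x, |Z i x| ≤ B := by
    intro i x
    have h1 := card_bounds hδ (cc i + x) (dd i + x)
    have h2 : (dd i + x) - (cc i + x) = L i - 2*t := by rw [← hdc i]; ring
    rw [h2] at h1
    have h4 : Z i x = (δ * ((cntF δ (cc i + x) (dd i + x)).card : ℝ)
        - max (L i - 2*t) 0) + (max (L i - 2*t) 0 - L i) := by
      rw [hZdef]; ring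
    rw [h4, hBdef]
    calc |_ + _| ≤ _ + _ := abs_add_le _ _
      _ ≤ δ + 2*|t| := add_le_add h1 (hmax3 i)
  have hcint : ∀ i, Integrable (fun x => δ * ((cntF δ (cc i + x) (dd i + x)).card : ℝ))
      (unif δ) := by
    intro i
    apply integrable_of_bounded' ((measurable_card δ (cc i) (dd i)).const_mul δ)
      (M := max (L i - 2*t) 0 + δ)
    intro x
    have h1 := card_bounds hδ (cc i + x) (dd i + x)
    have h2 : (dd i + x) - (cc i + x) = L i - 2*t := by rw [← hdc i]; ring
    rw [h2] at h1
    have h4 : δ * ((cntF δ (cc i + x) (dd i + x)).card : ℝ)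
        = (δ * ((cntF δ (cc i + x) (dd i + x)).card : ℝ) - max (L i - 2*t) 0)
          + max (L i - 2*t) 0 := by ring
    rw [h4]
    calc |_ + _| ≤ _ + _ := abs_add_le _ _
      _ ≤ δ + max (L i - 2*t) 0 := add_le_add h1 (le_of_eq (abs_of_nonneg (le_max_right _ _)))
      _ = max (L i - 2*t) 0 + δ := by ring
  have hZmeas : ∀ i, Measurable (Z i) := by
    intro i
    rw [hZdef]
    exact ((measurable_card δ (cc i) (dd i)).const_mul δ).sub measurable_const
  have hZInt : ∀ i, Integrable (Z i) (unif δ) := by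
    intro i
    rw [hZdef]
    exact (hcint i).sub (integrable_const _)
  have hZint0 : ∀ i, (∫ x, Z i x ∂(unif δ)) = max (L i - 2*t) 0 - L i := by
    intro i
    rw [hZdef]
    rw [integral_sub (hcint i) (integrable_const _), integral_card hδ (cc i) (dd i),
      integral_const, hdc i]
    simp [measure_univ]
  set e : Fin m → ℝ := fun i => max (L i - 2*t) 0 - L i with hedef
  have heb : ∀ i, |e i| ≤ 2*|t| := fun i => hmax3 i
  set M : ℝ := 2*δ + 4*|t| with hMdef
  have hMpos : 0 < M := by rw [hMdef]; linarith
  set W : Fin m → ℝ → ℝ := fun i x => Z i x - e i with hWdef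
  have hWmeas : ∀ i, Measurable (W i) := by
    intro i
    rw [hWdef]
    exact (hZmeas i).sub measurable_const
  have hWb : ∀ i x, |W i x| ≤ M := by
    intro i x
    have h4 : W i x = Z i x - e i := by rw [hWdef]
    rw [h4, sub_eq_add_neg]
    calc |_ + _| ≤ _ + _ := abs_add_le _ _
      _ ≤ B + 2*|t| := by
        rw [abs_neg]
        exact add_le_add (hZb i x) (heb i)
      _ ≤ M := by rw [hBdef, hMdef]; linarith
  have hWint : ∀ i, (∫ x, W i x ∂(unif δ)) = 0 := by
    intro i
    rw [hWdef]
    rw [integral_sub (hZInt i) (integrable_const _), hZint0 i, integral_const, hedef]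
    simp [measure_univ]
  have hDrw : ∀ ξ : Fin m → ℝ, Dsoft δ t (a + ξ) (a' + ξ) - (1/(m:ℝ)) * ∑ i, L i
      = (1/(m:ℝ)) * ∑ i, Z i (ξ i) := by
    intro ξ
    rw [Dsoft, ← mul_sub, ← Finset.sum_sub_distrib]
    congr 1
    apply Finset.sum_congr rfl
    intro i _
    rw [show (a + ξ) i = a i + ξ i from rfl, show (a' + ξ) i = a' i + ξ i from rfl,
      hdsoft i (ξ i), hZdef]
  by_cases hm : m = 0
  · subst hm
    have hset : {ξ : Fin 0 → ℝ | 4 * |t| + ε * κ <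
        |Dsoft δ t (a + ξ) (a' + ξ) - 1 / ((0:ℕ):ℝ) * ∑ i, L i|} = ∅ := by
      ext ξ
      simp only [Set.mem_setOf_eq, Set.mem_empty_iff_false, iff_false, not_lt]
      rw [hDrw ξ]
      simp only [Finset.univ_eq_empty, Finset.sum_empty, mul_zero, abs_zero]
      positivity
    rw [hset, measure_empty]
    exact zero_le
  have hm' : (0:ℝ) < m := by
    have := Nat.pos_of_ne_zero hm
    exact_mod_cast this
  by_cases hε1 : 1 ≤ ε
  · have hset : {ξ : Fin m → ℝ | 4 * |t| + ε * κ <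
        |Dsoft δ t (a + ξ) (a' + ξ) - 1 / (m:ℝ) * ∑ i, L i|} = ∅ := by
      ext ξ
      simp only [Set.mem_setOf_eq, Set.mem_empty_iff_false, iff_false, not_lt]
      rw [hDrw ξ]
      have h1 : |∑ i, Z i (ξ i)| ≤ (m:ℝ) * B := by
        calc |∑ i, Z i (ξ i)| ≤ ∑ i, |Z i (ξ i)| := Finset.abs_sum_le_sum_abs _ _
          _ ≤ ∑ _i : Fin m, B := Finset.sum_le_sum fun i _ => hZb i (ξ i)
          _ = (m:ℝ) * B := by rw [Finset.sum_const, Finset.card_univ, Fintype.card_fin,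
              nsmul_eq_mul]
      have h2 : |1 / (m:ℝ) * ∑ i, Z i (ξ i)| ≤ B := by
        rw [abs_mul, abs_of_nonneg (by positivity : (0:ℝ) ≤ 1 / (m:ℝ))]
        calc 1 / (m:ℝ) * |∑ i, Z i (ξ i)| ≤ 1 / (m:ℝ) * ((m:ℝ) * B) := by
              apply mul_le_mul_of_nonneg_left h1 (by positivity)
          _ = B := by field_simp
      have h3 : κ ≤ ε * κ := le_mul_of_one_le_left hκpos.le hε1
      rw [hBdef] at h2
      rw [hκdef] at h3
      linarith
    rw [hset, measure_empty]
    exact zero_le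
  push_neg at hε1
  set s : ℝ := ε / (6*M) with hsdef
  have hs : 0 ≤ s := by positivity
  have hsMval : s * M = ε / 6 := by rw [hsdef]; field_simp
  have hsM : s * M ≤ 1 := by rw [hsMval]; linarith
  set r : ℝ := (m:ℝ) * (ε * κ) with hrdef
  set W' : Fin m → ℝ → ℝ := fun i x => -(W i x) with hW'def
  have hW'meas : ∀ i, Measurable (W' i) := by
    intro i
    rw [hW'def]
    exact (hWmeas i).neg
  have hW'b : ∀ i x, |W' i x| ≤ M := by
    intro i x
    rw [hW'def]
    simp only [abs_neg]
    exact hWb i x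
  have hW'int : ∀ i, (∫ x, W' i x ∂(unif δ)) = 0 := by
    intro i
    rw [hW'def]
    rw [integral_neg, hWint i, neg_zero]
  have hsubset : {ξ : Fin m → ℝ | 4 * |t| + ε * κ <
        |Dsoft δ t (a + ξ) (a' + ξ) - 1 / (m:ℝ) * ∑ i, L i|}
      ⊆ {ξ | r ≤ ∑ i, W i (ξ i)} ∪ {ξ | r ≤ ∑ i, W' i (ξ i)} := by
    intro ξ hξ
    simp only [Set.mem_setOf_eq] at hξ
    rw [hDrw ξ] at hξ
    have hS : (m:ℝ) * (4*|t| + ε*κ) < |∑ i, Z i (ξ i)| := by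
      rw [abs_mul, abs_of_nonneg (by positivity : (0:ℝ) ≤ 1 / (m:ℝ))] at hξ
      rw [show (m:ℝ) * (4*|t| + ε*κ) = (4*|t| + ε*κ) * m by ring, ← lt_div_iff₀ hm']
      calc (4*|t| + ε*κ) < 1 / (m:ℝ) * |∑ i, Z i (ξ i)| := hξ
        _ = |∑ i, Z i (ξ i)| / m := by ring
    have hZsplit : ∑ i, Z i (ξ i) = ∑ i, W i (ξ i) + ∑ i, e i := by
      rw [← Finset.sum_add_distrib]
      apply Finset.sum_congr rfl
      intro i _
      rw [hWdef]
      ring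
    have hesum : |∑ i, e i| ≤ (m:ℝ) * (2*|t|) := by
      calc |∑ i, e i| ≤ ∑ i, |e i| := Finset.abs_sum_le_sum_abs _ _
        _ ≤ ∑ _i : Fin m, 2*|t| := Finset.sum_le_sum fun i _ => heb i
        _ = (m:ℝ) * (2*|t|) := by rw [Finset.sum_const, Finset.card_univ, Fintype.card_fin,
            nsmul_eq_mul]
      
    have htri := abs_add_le (∑ i, W i (ξ i)) (∑ i, e i)
    rw [← hZsplit] at htri
    have hWlb : r < |∑ i, W i (ξ i)| := by
      have hmt : (0:ℝ) ≤ (m:ℝ) * (2*|t|) := by positivity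
      have hexpand : (m:ℝ) * (4*|t| + ε*κ) = (m:ℝ)*(ε*κ) + (m:ℝ)*(2*|t|) + (m:ℝ)*(2*|t|) := by
        ring
      rw [hrdef]
      linarith
    rcases lt_abs.mp hWlb with h | h
    · exact Or.inl h.le
    · right
      simp only [Set.mem_setOf_eq, hW'def]
      rw [show (∑ i, -(W i (ξ i))) = -∑ i, W i (ξ i) from by rw [← Finset.sum_neg_distrib]]
      exact h.le
  have hA := chernoff_side hδ m W hWmeas hWb hWint hs hsM r
  have hA' := chernoff_side hδ m W' hW'meas hW'b hW'int hs hsM r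
  have hbound : -s*r + (m:ℝ)*((3/4)*s^2*M^2) ≤ -(1/48)*ε^2*m := by
    have hM4κ : M ≤ 4*κ := by rw [hMdef, hκdef]; linarith
    have hsM2 : (3/4)*s^2*M^2 = ε^2/48 := by
      rw [hsdef]
      field_simp
      ring
    have h1 : s * r = ε^2*κ*(m:ℝ)/(6*M) := by
      rw [hsdef, hrdef]
      field_simp
    have h2 : ε^2/24*(m:ℝ) ≤ ε^2*κ*(m:ℝ)/(6*M) := by
      rw [le_div_iff₀ (by positivity : (0:ℝ) < 6*M)]
      have h3 : (0:ℝ) ≤ ε^2*(m:ℝ) := by positivity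
      nlinarith [mul_le_mul_of_nonneg_left hM4κ h3]
    rw [hsM2, neg_mul, h1]
    linarith
  calc unifPi δ m {ξ : Fin m → ℝ | 4 * |t| + ε * κ <
        |Dsoft δ t (a + ξ) (a' + ξ) - 1 / (m:ℝ) * ∑ i, L i|}
      ≤ unifPi δ m ({ξ | r ≤ ∑ i, W i (ξ i)} ∪ {ξ | r ≤ ∑ i, W' i (ξ i)}) :=
        measure_mono hsubset
    _ ≤ unifPi δ m {ξ | r ≤ ∑ i, W i (ξ i)} + unifPi δ m {ξ | r ≤ ∑ i, W' i (ξ i)} :=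
        measure_union_le _ _
    _ ≤ ENNReal.ofReal (Real.exp (-s * r + m * ((3/4) * s^2 * M^2)))
        + ENNReal.ofReal (Real.exp (-s * r + m * ((3/4) * s^2 * M^2))) := add_le_add hA hA'
    _ ≤ ENNReal.ofReal (2 * Real.exp (-(1/48) * ε^2 * m)) := by
        rw [← ENNReal.ofReal_add (Real.exp_pos _).le (Real.exp_pos _).le]
        apply ENNReal.ofReal_le_ofReal
        have := Real.exp_le_exp.mpr hbound
        linarith
end
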